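/- arXiv:2410.00399 — 6 statements merged into one kernel-verified Lean document; each statement's English description precedes it below -/
import Mathlib

section
/- The recursively defined HOMFLY polynomial f of a forest quiver is well-defined: the result of the recursion does not depend on the order in which leaves are removed or on the decomposition into connected components. -/
open scoped Classical

noncomputable section

abbrev K : Type := FractionRing (MvPolynomial Bool ℚ)

/-- The variable `a` of the HOMFLY polynomial. -/
def A : K := algebraMap (MvPolynomial Bool ℚ) K (MvPolynomial.X false)

/-- The variable `z` of the HOMFLY polynomial. -/
def Z : K := algebraMap (MvPolynomial Bool ℚ) K (MvPolynomial.X true)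

/-- A rule assigning a value to every finite simple graph. -/
abbrev GraphFun : Type 1 :=
  ∀ (V : Type) [Fintype V] [DecidableEq V], SimpleGraph V → K

/-- `v` is a leaf whose unique neighbor is `w`. -/
def IsLeaf {V : Type} (G : SimpleGraph V) (v w : V) : Prop :=
  G.neighborSet v = {w}

/-- The defining recursion of the HOMFLY polynomial of a forest:
value `1` on the empty graph, `(z+z⁻¹)/a − z⁻¹/a³` on a single vertex,
the leaf-removal recursion, and multiplicativity over disjoint unions
(formulated via vertex subsets with no crossing edges). -/
def HomflyRules (f : GraphFun) : Prop :=
  (∀ (V : Type) [Fintype V] [DecidableEq V] (G : SimpleGraph V),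
      IsEmpty V → f V G = 1) ∧
  (∀ (V : Type) [Fintype V] [DecidableEq V] (G : SimpleGraph V),
      Fintype.card V = 1 → f V G = (Z + Z⁻¹) / A - Z⁻¹ / A ^ 3) ∧
  (∀ (V : Type) [Fintype V] [DecidableEq V] (G : SimpleGraph V),
      G.IsAcyclic → ∀ v w : V, IsLeaf G v w →
      f V G = (Z / A) * f ↥{x : V | x ≠ v} (G.induce {x : V | x ≠ v}) +
        (1 / A ^ 2) * f ↥{x : V | x ≠ v ∧ x ≠ w} (G.induce {x : V | x ≠ v ∧ x ≠ w})) ∧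
  (∀ (V : Type) [Fintype V] [DecidableEq V] (G : SimpleGraph V),
      G.IsAcyclic → ∀ s : Set V, (∀ x ∈ s, ∀ y ∉ s, ¬ G.Adj x y) →
      f V G = f ↥s (G.induce s) * f ↥sᶜ (G.induce sᶜ))

/-!
Uniqueness: a nonempty forest has a vertex with at most one neighbour, and at such a vertex the
rules express `f` through strictly smaller forests.

Existence: on the vertex subsets of a fixed graph, apply the recursion at some vertex with at
most one neighbour. A diamond lemma shows that the result does not depend on that choice:
either two such vertices are adjacent (a `K₂` component), or one is isolated, or both are
leaves with a common or with distinct neighbours, and in each case expanding at one vertex and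
then the other gives a symmetric expression. Multiplicativity then follows by expanding at a
vertex of either part, and the value on an induced subgraph is the value on its vertex set.
-/

open Finset

theorem SimpleGraph.IsAcyclic.exists_neighborSet_subsingleton {V : Type*} [Finite V] [Nonempty V]
    {G : SimpleGraph V} (hG : G.IsAcyclic) : ∃ v, (G.neighborSet v).Subsingleton := by
  -- the start of a longest path has all its neighbours on the path, so only its second vertex
  obtain ⟨u, v, p, hp, hmax⟩ := SimpleGraph.Walk.exists_isPath_forall_isPath_length_le_length G
  have hsupp : ∀ w, G.Adj u w → w ∈ p.support := fun w hw ↦ by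
    by_contra h
    have := hmax _ _ (p.cons hw.symm) ((SimpleGraph.Walk.cons_isPath_iff _ _).mpr ⟨hp, h⟩)
    simp at this
  refine ⟨u, fun a ha b hb ↦ ?_⟩
  rw [hG.eq_snd_of_adj_start hp ha (hsupp a ha), hG.eq_snd_of_adj_start hp hb (hsupp b hb)]

namespace Homfly

section Nbhd

variable {V : Type*} (G : SimpleGraph V)

def nbhd (t : Finset V) (v : V) : Finset V := t.filter (G.Adj v)

variable {G} {t t' : Finset V} {v w : V}

lemma mem_nbhd : w ∈ nbhd G t v ↔ w ∈ t ∧ G.Adj v w := mem_filter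

lemma nbhd_mono (h : t' ⊆ t) : nbhd G t' v ⊆ nbhd G t v := filter_subset_filter _ h

lemma nbhd_eq_singleton_of_adj (hlow : #(nbhd G t v) ≤ 1) (hw : w ∈ t) (hadj : G.Adj v w) :
    nbhd G t v = {w} :=
  have hmem : w ∈ nbhd G t v := mem_nbhd.mpr ⟨hw, hadj⟩
  eq_singleton_iff_unique_mem.mpr ⟨hmem, fun _ hu ↦ card_le_one.mp hlow _ hu _ hmem⟩

lemma nbhd_eq_empty_or_singleton (hlow : #(nbhd G t v) ≤ 1) :
    nbhd G t v = ∅ ∨ ∃ w, nbhd G t v = {w} := by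
  rcases Nat.le_one_iff_eq_zero_or_eq_one.mp hlow with h | h
  · exact .inl (card_eq_zero.mp h)
  · exact .inr (card_eq_one.mp h)

lemma nbhd_of_subset_of_nbhd_eq_singleton (hsub : t' ⊆ t) (hN : nbhd G t v = {w}) :
    nbhd G t' v = if w ∈ t' then {w} else ∅ := by
  ext u
  have hu : u ∈ t ∧ G.Adj v u ↔ u = w := by rw [← mem_nbhd, hN, mem_singleton]
  split_ifs <;> simp only [mem_nbhd, mem_singleton, notMem_empty] <;> grind

lemma exists_card_nbhd_le_one (hG : G.IsAcyclic) (ht : t.Nonempty) :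
    ∃ v ∈ t, #(nbhd G t v) ≤ 1 := by
  have : Nonempty t := ht.to_subtype
  obtain ⟨⟨v, hv⟩, hsub⟩ := (hG.induce (t : Set V)).exists_neighborSet_subsingleton
  refine ⟨v, hv, card_le_one.mpr fun a ha b hb ↦ ?_⟩
  rw [mem_nbhd] at ha hb
  exact congrArg Subtype.val
    (hsub (show ⟨a, ha.1⟩ ∈ _ from ha.2) (show ⟨b, hb.1⟩ ∈ _ from hb.2))

lemma nbhd_map {W : Type*} (f : W ↪ V) (t : Finset W) (v : W) :
    nbhd G (t.map f) (f v) = (nbhd (G.comap f) t v).map f := by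
  rw [nbhd, filter_map]
  rfl

end Nbhd

variable {R : Type*} [CommRing R] (x y s : R) {V : Type*} [DecidableEq V] (G : SimpleGraph V)

/-- The recursion at a vertex `v` with at most one neighbour in `t`; the sum has at most one
term, so it stands for the neighbour without having to choose it. -/
def step (F : Finset V → R) (t : Finset V) (v : V) : R :=
  if nbhd G t v = ∅ then s * F (t.erase v)
  else x * F (t.erase v) + y * ∑ w ∈ nbhd G t v, F ((t.erase v).erase w)

/-- The value `1` when no vertex of `t` has at most one neighbour in `t` is a junk value; it
never occurs for forests. -/
def eval (t : Finset V) : R :=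
  if h : ∃ v ∈ t, #(nbhd G t v) ≤ 1 then
    if nbhd G t h.choose = ∅ then s * eval (t.erase h.choose)
    else x * eval (t.erase h.choose) +
      y * ∑ w ∈ nbhd G t h.choose, eval ((t.erase h.choose).erase w)
  else 1
termination_by #t
decreasing_by
  all_goals
    have hlt := card_erase_lt_of_mem h.choose_spec.1
    first | exact hlt | exact card_erase_le.trans_lt hlt

lemma eval_eq (t : Finset V) :
    eval x y s G t =
      if h : ∃ v ∈ t, #(nbhd G t v) ≤ 1 then step x y s G (eval x y s G) t h.choose else 1 := by
  rw [eval]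
  rfl

def SatisfiesStep (F : Finset V → R) (t : Finset V) : Prop :=
  ∀ v ∈ t, #(nbhd G t v) ≤ 1 → F t = step x y s G F t v

variable {x y s G} {F : Finset V → R} {t t' : Finset V} {v v₀ w w₀ : V}

lemma nbhd_erase (a : V) : nbhd G (t.erase a) v = (nbhd G t v).erase a := filter_erase _ _ _

lemma step_of_nbhd_eq_empty (h : nbhd G t v = ∅) : step x y s G F t v = s * F (t.erase v) :=
  if_pos h

lemma step_of_nbhd_eq_singleton (h : nbhd G t v = {w}) :
    step x y s G F t v = x * F (t.erase v) + y * F ((t.erase v).erase w) := by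
  simp [step, h]

lemma SatisfiesStep.eq_of_nbhd_eq_empty (hF : SatisfiesStep x y s G F t') (hsub : t' ⊆ t)
    (hv : v ∈ t') (hN : nbhd G t v = ∅) : F t' = s * F (t'.erase v) := by
  have hN' : nbhd G t' v = ∅ := subset_empty.mp (hN ▸ nbhd_mono hsub)
  rw [hF v hv (by simp [hN']), step_of_nbhd_eq_empty hN']

lemma SatisfiesStep.eq_of_nbhd_eq_singleton (hF : SatisfiesStep x y s G F t') (hsub : t' ⊆ t)
    (hv : v ∈ t') (hN : nbhd G t v = {w}) :
    F t' = if w ∈ t' then x * F (t'.erase v) + y * F ((t'.erase v).erase w)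
      else s * F (t'.erase v) := by
  have hN' := nbhd_of_subset_of_nbhd_eq_singleton hsub hN
  rw [hF v hv (by split_ifs at hN' <;> simp [hN'])]
  split_ifs at hN' ⊢
  · exact step_of_nbhd_eq_singleton hN'
  · exact step_of_nbhd_eq_empty hN'

lemma erase_erase_ssubset (hv : v ∈ t) : (t.erase v).erase w ⊂ t :=
  (erase_subset _ _).trans_ssubset (erase_ssubset hv)

lemma step_eq_of_adj (hF : ∀ t' ⊂ t, SatisfiesStep x y s G F t') (hv : v ∈ t) (hv₀ : v₀ ∈ t)
    (hlow : #(nbhd G t v) ≤ 1) (hlow₀ : #(nbhd G t v₀) ≤ 1) (hadj : G.Adj v v₀) :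
    step x y s G F t v = (x * s + y) * F ((t.erase v).erase v₀) := by
  rw [step_of_nbhd_eq_singleton (nbhd_eq_singleton_of_adj hlow hv₀ hadj),
    (hF _ (erase_ssubset hv)).eq_of_nbhd_eq_singleton (erase_subset v t)
      (mem_erase.mpr ⟨hadj.ne.symm, hv₀⟩) (nbhd_eq_singleton_of_adj hlow₀ hv hadj.symm)]
  simp only [mem_erase, ne_eq, not_true_eq_false, false_and, if_false]
  ring

/-- An isolated vertex `v` splits off a factor `s` at every stage of the recursion at `v₀`. -/
lemma step_comm_of_nbhd_eq_empty (hF : ∀ t' ⊂ t, SatisfiesStep x y s G F t') (hv : v ∈ t)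
    (hv₀ : v₀ ∈ t) (hlow₀ : #(nbhd G t v₀) ≤ 1) (hne : v ≠ v₀) (hN : nbhd G t v = ∅) :
    step x y s G F t v = step x y s G F t v₀ := by
  have hvN₀ : v ∉ nbhd G t v₀ := fun h ↦ by
    simpa [hN] using mem_nbhd.mpr ⟨hv₀, (mem_nbhd.mp h).2.symm⟩
  have hN₀ : nbhd G (t.erase v) v₀ = nbhd G t v₀ := by rw [nbhd_erase, erase_eq_of_notMem hvN₀]
  have hsplit : ∀ t' ⊂ t, v ∈ t' → F t' = s * F (t'.erase v) := fun t' ht' hv' ↦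
    (hF t' ht').eq_of_nbhd_eq_empty ht'.subset hv' hN
  rw [step_of_nbhd_eq_empty hN,
    hF _ (erase_ssubset hv) v₀ (mem_erase.mpr ⟨hne.symm, hv₀⟩) (hN₀ ▸ hlow₀)]
  unfold step
  rw [hN₀, hsplit _ (erase_ssubset hv₀) (mem_erase.mpr ⟨hne, hv⟩),
    sum_congr rfl fun w hw ↦ hsplit _ (erase_erase_ssubset hv₀)
      (mem_erase.mpr ⟨by rintro rfl; exact hvN₀ hw, mem_erase.mpr ⟨hne, hv⟩⟩)]
  split_ifs
  · simp only [erase_right_comm]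
  · simp only [← mul_sum, erase_right_comm]
    ring

lemma step_comm_of_nbhd_eq_singleton (hF : ∀ t' ⊂ t, SatisfiesStep x y s G F t') (hv : v ∈ t)
    (hv₀ : v₀ ∈ t) (hne : v ≠ v₀) (hN : nbhd G t v = {w}) (hN₀ : nbhd G t v₀ = {w₀})
    (hnadj : ¬ G.Adj v v₀) :
    step x y s G F t v = step x y s G F t v₀ := by
  obtain ⟨hw, hadj⟩ := mem_nbhd.mp (hN ▸ mem_singleton_self w)
  obtain ⟨hw₀, hadj₀⟩ := mem_nbhd.mp (hN₀ ▸ mem_singleton_self w₀)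
  have hwv₀ : w ≠ v₀ := by rintro rfl; exact hnadj hadj
  have hw₀v : w₀ ≠ v := by rintro rfl; exact hnadj hadj₀.symm
  rw [step_of_nbhd_eq_singleton hN, step_of_nbhd_eq_singleton hN₀,
    (hF _ (erase_ssubset hv)).eq_of_nbhd_eq_singleton (erase_subset _ _)
      (mem_erase.mpr ⟨hne.symm, hv₀⟩) hN₀,
    (hF _ (erase_erase_ssubset hv)).eq_of_nbhd_eq_singleton (erase_erase_ssubset hv).subset
      (mem_erase.mpr ⟨hwv₀.symm, mem_erase.mpr ⟨hne.symm, hv₀⟩⟩) hN₀,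
    (hF _ (erase_ssubset hv₀)).eq_of_nbhd_eq_singleton (erase_subset _ _)
      (mem_erase.mpr ⟨hne, hv⟩) hN,
    (hF _ (erase_erase_ssubset hv₀)).eq_of_nbhd_eq_singleton (erase_erase_ssubset hv₀).subset
      (mem_erase.mpr ⟨hw₀v.symm, mem_erase.mpr ⟨hne, hv⟩⟩) hN]
  rcases eq_or_ne w w₀ with rfl | hww₀
  · simp only [mem_erase, ne_eq, hw, hwv₀, hw₀v, not_true_eq_false, not_false_eq_true, and_true,
      if_true, if_false, erase_right_comm]
  · simp only [mem_erase, ne_eq, hw, hw₀, hwv₀, hw₀v, hww₀, hww₀.symm, not_false_eq_true,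
      and_self, if_true, erase_right_comm]
    ring

lemma step_comm (hF : ∀ t' ⊂ t, SatisfiesStep x y s G F t') (hv : v ∈ t) (hv₀ : v₀ ∈ t)
    (hlow : #(nbhd G t v) ≤ 1) (hlow₀ : #(nbhd G t v₀) ≤ 1) :
    step x y s G F t v = step x y s G F t v₀ := by
  rcases eq_or_ne v v₀ with rfl | hne
  · rfl
  by_cases hadj : G.Adj v v₀
  · rw [step_eq_of_adj hF hv hv₀ hlow hlow₀ hadj, step_eq_of_adj hF hv₀ hv hlow₀ hlow hadj.symm,
      erase_right_comm]
  rcases nbhd_eq_empty_or_singleton hlow with hN | ⟨w, hN⟩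
  · exact step_comm_of_nbhd_eq_empty hF hv hv₀ hlow₀ hne hN
  rcases nbhd_eq_empty_or_singleton hlow₀ with hN₀ | ⟨w₀, hN₀⟩
  · exact (step_comm_of_nbhd_eq_empty hF hv₀ hv hlow hne.symm hN₀).symm
  exact step_comm_of_nbhd_eq_singleton hF hv hv₀ hne hN hN₀ hadj

theorem satisfiesStep_eval (t : Finset V) : SatisfiesStep x y s G (eval x y s G) t := by
  induction t using Finset.strongInduction with
  | H t ih =>
    intro v hv hlow
    have h : ∃ v ∈ t, #(nbhd G t v) ≤ 1 := ⟨v, hv, hlow⟩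
    rw [eval_eq, dif_pos h]
    exact step_comm ih h.choose_spec.1 hv h.choose_spec.2 hlow

lemma eval_empty : eval x y s G ∅ = 1 := by
  rw [eval_eq, dif_neg (by simp)]

theorem eval_union (hG : G.IsAcyclic) {t₁ t₂ : Finset V} (hdisj : Disjoint t₁ t₂)
    (hcross : ∀ a ∈ t₁, ∀ b ∈ t₂, ¬ G.Adj a b) :
    eval x y s G (t₁ ∪ t₂) = eval x y s G t₁ * eval x y s G t₂ := by
  induction hn : #(t₁ ∪ t₂) using Nat.strong_induction_on generalizing t₁ t₂ with
  | _ n ih =>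
  rcases (t₁ ∪ t₂).eq_empty_or_nonempty with h | h
  · obtain ⟨rfl, rfl⟩ := union_eq_empty.mp h
    simp [eval_empty]
  obtain ⟨v, hv, hlow⟩ := exists_card_nbhd_le_one hG h
  wlog hv₁ : v ∈ t₁ generalizing t₁ t₂
  · rw [union_comm] at hn h hv hlow ⊢
    rw [mul_comm]
    exact this hdisj.symm (fun a ha b hb hab ↦ hcross b hb a ha hab.symm) hn h hv hlow
      ((mem_union.mp hv).resolve_right hv₁)
  have hN : nbhd G (t₁ ∪ t₂) v = nbhd G t₁ v := by
    rw [nbhd, filter_union, filter_false_of_mem (hcross v hv₁), union_empty]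
    rfl
  have hsplit : ∀ t' ⊂ t₁, eval x y s G (t' ∪ t₂) = eval x y s G t' * eval x y s G t₂ :=
    fun t' ht' ↦ ih _ (by
      rw [← hn, card_union_of_disjoint (disjoint_of_subset_left ht'.subset hdisj),
        card_union_of_disjoint hdisj]
      exact Nat.add_lt_add_right (card_lt_card ht') _)
      (disjoint_of_subset_left ht'.subset hdisj) (fun a ha ↦ hcross a (ht'.subset ha)) rfl
  have hnotin : ∀ a ∈ t₁, a ∉ t₂ := fun _ ha ↦ disjoint_left.mp hdisj ha
  rw [satisfiesStep_eval _ v hv hlow, satisfiesStep_eval t₁ v hv₁ (hN ▸ hlow)]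
  unfold step
  rw [hN, erase_union_distrib, erase_eq_of_notMem (hnotin v hv₁), hsplit _ (erase_ssubset hv₁),
    sum_congr rfl fun w hw ↦ by
      rw [erase_union_distrib, erase_eq_of_notMem (hnotin w (mem_nbhd.mp hw).1),
        hsplit _ (erase_erase_ssubset hv₁)]]
  split_ifs
  · ring
  · rw [← sum_mul]
    ring

theorem eval_comap {W : Type*} [DecidableEq W] (f : W ↪ V) (t : Finset W) :
    eval x y s (G.comap f) t = eval x y s G (t.map f) := by
  induction t using Finset.strongInduction with
  | H t ih =>
    by_cases h : ∃ v ∈ t, #(nbhd (G.comap f) t v) ≤ 1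
    · obtain ⟨v, hv, hlow⟩ := h
      have hlow' : #(nbhd G (t.map f) (f v)) ≤ 1 := by rwa [nbhd_map, card_map]
      rw [satisfiesStep_eval t v hv hlow, satisfiesStep_eval _ (f v) (mem_map_of_mem f hv) hlow']
      unfold step
      rw [ih _ (erase_ssubset hv), sum_congr rfl fun w _ ↦ ih _ (erase_erase_ssubset hv)]
      simp only [nbhd_map, map_eq_empty, sum_map, map_erase]
    · rw [eval_eq, dif_neg h, eval_eq, dif_neg]
      rintro ⟨_, hu, hlow⟩
      obtain ⟨v, hv, rfl⟩ := mem_map.mp hu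
      exact h ⟨v, hv, by rwa [nbhd_map, card_map] at hlow⟩

theorem eval_induce_univ [Fintype V] (S : Set V) [Fintype S] [DecidableEq S] :
    eval x y s (G.induce S) univ = eval x y s G S.toFinset :=
  (eval_comap _ _).trans (congrArg _ (by ext; simp))

end Homfly

open Homfly

def homfly : GraphFun := fun _ _ _ G ↦
  eval (Z / A) (1 / A ^ 2) ((Z + Z⁻¹) / A - Z⁻¹ / A ^ 3) G univ

theorem homflyRules_homfly : HomflyRules homfly := by
  refine ⟨fun V _ _ G hV ↦ ?_, fun V _ _ G hV ↦ ?_, fun V _ _ G _ v w hvw ↦ ?_,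
    fun V _ _ G hG S hS ↦ ?_⟩ <;> unfold homfly
  · rw [univ_eq_empty, eval_empty]
  · obtain ⟨v, hv⟩ := card_eq_one.mp hV
    have hN : nbhd G {v} v = ∅ := by
      ext u
      simp only [mem_nbhd, mem_singleton, notMem_empty, iff_false, not_and]
      rintro rfl
      exact G.irrefl
    rw [hv, satisfiesStep_eval {v} v (mem_singleton_self v) (by simp [hN]),
      step_of_nbhd_eq_empty hN, erase_singleton, eval_empty, mul_one]
  · have hN : nbhd G univ v = {w} := by
      ext u
      rw [IsLeaf, Set.ext_iff] at hvw
      simpa [mem_nbhd] using hvw u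
    rw [eval_induce_univ, eval_induce_univ,
      satisfiesStep_eval univ v (mem_univ v) (by simp [hN]), step_of_nbhd_eq_singleton hN]
    congr <;> ext <;> simp [and_comm]
  · rw [eval_induce_univ, eval_induce_univ,
      ← eval_union hG (Set.disjoint_toFinset.mpr disjoint_compl_right)
        (fun a ha b hb ↦ hS a (by simpa using ha) b (by simpa using hb))]
    congr
    ext
    simp

lemma HomflyRules.eq_of_unique {f : GraphFun} (hf : HomflyRules f) {V : Type} {_ : Fintype V}
    {_ : DecidableEq V} [Unique V] (G : SimpleGraph V) : f V G = (Z + Z⁻¹) / A - Z⁻¹ / A ^ 3 :=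
  hf.2.1 V G Fintype.card_unique

theorem HomflyRules.eq_of_isAcyclic {f g : GraphFun} (hf : HomflyRules f) (hg : HomflyRules g)
    {V : Type} [Fintype V] [DecidableEq V] {G : SimpleGraph V} (hG : G.IsAcyclic) :
    f V G = g V G := by
  have ⟨hf_empty, _, hf_leaf, hf_mul⟩ := hf
  have ⟨hg_empty, _, hg_leaf, hg_mul⟩ := hg
  induction hn : Fintype.card V using Nat.strong_induction_on generalizing V with
  | _ n ih =>
  have ih_induce (S : Set V) {_ : Fintype S} {_ : DecidableEq S} (v : V) (hv : v ∉ S) :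
      f S (G.induce S) = g S (G.induce S) :=
    ih _ (hn ▸ Fintype.card_lt_of_injective_of_notMem _ Subtype.val_injective (by simpa using hv))
      (hG.induce S) rfl
  rcases isEmpty_or_nonempty V with hV | hV
  · rw [hf_empty V G hV, hg_empty V G hV]
  obtain ⟨v, hv⟩ := hG.exists_neighborSet_subsingleton
  rcases hv.eq_empty_or_singleton with hN | ⟨w, hN⟩
  · have hcross : ∀ a ∈ ({v} : Set V), ∀ b ∉ ({v} : Set V), ¬ G.Adj a b := by
      rintro a rfl b - hab
      simpa [hN] using (G.mem_neighborSet a b).mpr hab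
    rw [hf_mul V G hG _ hcross, hg_mul V G hG _ hcross, hf.eq_of_unique, hg.eq_of_unique,
      ih_induce _ v (by simp)]
  · rw [hf_leaf V G hG v w hN, hg_leaf V G hG v w hN, ih_induce _ v (by simp),
      ih_induce _ v (by simp)]

/-- The recursively defined HOMFLY polynomial of a forest quiver is well-defined:
a function satisfying the defining rules exists, and any two such functions agree
on every forest. -/
theorem homfly_well_defined :
    (∃ f : GraphFun, HomflyRules f) ∧
    ∀ f g : GraphFun, HomflyRules f → HomflyRules g →
      ∀ (V : Type) [Fintype V] [DecidableEq V] (G : SimpleGraph V),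
        G.IsAcyclic → f V G = g V G :=
  ⟨⟨homfly, homflyRules_homfly⟩, fun _ _ hf hg _ _ _ _ hG ↦ hf.eq_of_isAcyclic hg hG⟩
end
end

section
/- For the star graph S_n on n vertices (one center adjacent to n−1 leaves), with n ≥ 4, the HOMFLY polynomial satisfies f(S_n) = z^{n−2}/a^n + ((z^{n−1}+z^{n−3})/a^{n−1})·P₁ + Σ_{k=2}^{n−2} (z^{k−2}/a^{k})·P₁^{n−k}, where P₁ = (z+z⁻¹)/a − z⁻¹/a³. -/
open scoped Classical

noncomputable section

/-- The star graph on `n` vertices: the center `0` joined to the `n − 1` leaves. -/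
def starGraph (n : ℕ) : SimpleGraph (Fin n) :=
  SimpleGraph.fromRel (fun i _ => (i : ℕ) = 0)

/-! Deleting a leaf of the star `S_{n+2}` leaves `S_{n+1}`, while deleting the leaf together with
the centre leaves `n` isolated vertices, worth `P₁ ^ n` by multiplicativity. Hence
`f(S_{n+2}) = (z/a) f(S_{n+1}) + P₁ ^ n / a²`, which unrolls to
`(z/a)^{n+1} P₁ + ∑_{i+j=n} z^i / a^{i+2} P₁^j`; together with `(z/a)^{n+1} P₁`, the terms
`j = 0, 1` of this sum form the first two summands of the stated formula. -/

open Finset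

def P₁ : K := (Z + Z⁻¹) / A - Z⁻¹ / A ^ 3

/-- The value of a HOMFLY rule on a star with `n ≥ 1` vertices; `starPoly 0 = 1` only seeds the
recursion. -/
def starPoly : ℕ → K
  | 0 => 1
  | 1 => P₁
  | n + 2 => Z / A * starPoly (n + 1) + 1 / A ^ 2 * P₁ ^ n

theorem starPoly_add_two (n : ℕ) :
    starPoly (n + 2) = (Z / A) ^ (n + 1) * P₁ +
      ∑ p ∈ antidiagonal n, Z ^ p.1 / A ^ (p.1 + 2) * P₁ ^ p.2 := by
  induction n with
  | zero => simp [starPoly]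
  | succ n ih =>
    have hshift (p : ℕ × ℕ) : Z / A * (Z ^ p.1 / A ^ (p.1 + 2) * P₁ ^ p.2) =
        Z ^ (p.1 + 1) / A ^ (p.1 + 1 + 2) * P₁ ^ p.2 := by
      ring
    rw [starPoly, ih, Nat.sum_antidiagonal_succ, mul_add, mul_sum]
    simp only [hshift]
    ring

namespace SimpleGraph

variable {V : Type*} {r : V}

theorem induce_starGraph_of_mem {s : Set V} (hr : r ∈ s) :
    (starGraph r).induce s = starGraph (⟨r, hr⟩ : s) := by
  ext x y
  simp [Subtype.ext_iff]

theorem induce_starGraph_of_notMem {s : Set V} (hr : r ∉ s) : (starGraph r).induce s = ⊥ := by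
  ext ⟨x, hx⟩ ⟨y, hy⟩
  simp only [comap_adj, Function.Embedding.coe_subtype, starGraph_adj, bot_adj, iff_false]
  rintro ⟨-, rfl | rfl⟩ <;> contradiction

theorem isLeaf_starGraph {V : Type} {r v : V} (hv : v ≠ r) : IsLeaf (starGraph r) v r := by
  ext x
  simp only [mem_neighborSet, starGraph_adj, Set.mem_singleton_iff]
  grind

end SimpleGraph

theorem starGraph_eq_starGraph_zero (n : ℕ) [NeZero n] :
    starGraph n = SimpleGraph.starGraph (0 : Fin n) := by
  ext i j
  simp only [starGraph, SimpleGraph.fromRel_adj, SimpleGraph.starGraph_adj, ← Fin.val_eq_zero_iff]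

namespace HomflyRules

variable {f : GraphFun}

/- The instance arguments below are implicit: `HomflyRules` evaluates `f` on subtypes at classical
instances, which are not defeq to the synthesized ones, so the lemmas must take the instances by
unification to rewrite there. -/

theorem apply_of_card_eq_one (hf : HomflyRules f) {V : Type} {_ : Fintype V} {_ : DecidableEq V}
    (G : SimpleGraph V) (h : Fintype.card V = 1) : f V G = P₁ :=
  hf.2.1 V G h

theorem apply_bot (hf : HomflyRules f) (V : Type) {_ : Fintype V} {_ : DecidableEq V} :
    f V ⊥ = P₁ ^ Fintype.card V := by
  obtain ⟨hempty, -, -, hsplit⟩ := id hf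
  induction h : Fintype.card V generalizing V with
  | zero => rw [hempty V ⊥ (Fintype.card_eq_zero_iff.mp h), pow_zero]
  | succ m ih =>
    obtain ⟨v⟩ := Fintype.card_pos_iff.mp (by omega : 0 < Fintype.card V)
    rw [hsplit V ⊥ SimpleGraph.isAcyclic_bot {v} (by simp), SimpleGraph.induce_bot,
      SimpleGraph.induce_bot, hf.apply_of_card_eq_one _ (by simp),
      ih _ (by simp [Fintype.card_subtype, filter_ne', h]), pow_succ']

theorem apply_starGraph (hf : HomflyRules f) (V : Type) {_ : Fintype V} {_ : DecidableEq V}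
    (r : V) : f V (SimpleGraph.starGraph r) = starPoly (Fintype.card V) := by
  obtain ⟨-, -, hleaf, -⟩ := id hf
  induction h : Fintype.card V generalizing V with
  | zero => exact (Fintype.card_eq_zero_iff.mp h).elim r
  | succ m ih =>
    cases m with
    | zero => exact hf.apply_of_card_eq_one _ h
    | succ m =>
      obtain ⟨v, hv⟩ := Fintype.exists_ne_of_one_lt_card (by omega) r
      rw [hleaf V _ (SimpleGraph.isAcyclic_starGraph r) v r (SimpleGraph.isLeaf_starGraph hv),
        SimpleGraph.induce_starGraph_of_mem (s := {x | x ≠ v}) hv.symm,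
        SimpleGraph.induce_starGraph_of_notMem (by simp),
        ih _ _ (by simp [Fintype.card_subtype, filter_ne', h]), hf.apply_bot, starPoly]
      congr
      simp [Fintype.card_subtype, filter_and, filter_ne', h, hv]

end HomflyRules

/-- The HOMFLY polynomial of the star `S_n` on `n ≥ 4` vertices, where
`P₁ = (z+z⁻¹)/a − z⁻¹/a³` is the value on a single vertex. -/
theorem homfly_star (f : GraphFun) (hf : HomflyRules f) (n : ℕ) (hn : 4 ≤ n) :
    f (Fin n) (starGraph n) =
      Z ^ (n - 2) / A ^ n +
      ((Z ^ (n - 1) + Z ^ (n - 3)) / A ^ (n - 1)) * ((Z + Z⁻¹) / A - Z⁻¹ / A ^ 3) +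
      ∑ k ∈ Finset.Icc 2 (n - 2),
        (Z ^ (k - 2) / A ^ k) * ((Z + Z⁻¹) / A - Z⁻¹ / A ^ 3) ^ (n - k) := by
  obtain ⟨m, rfl⟩ := Nat.exists_eq_add_of_le' hn
  have hsum : ∑ k ∈ Icc 2 (m + 4 - 2), Z ^ (k - 2) / A ^ k * P₁ ^ (m + 4 - k) =
      ∑ p ∈ antidiagonal m, Z ^ p.1 / A ^ (p.1 + 2) * P₁ ^ (p.2 + 2) := by
    rw [Nat.sum_antidiagonal_eq_sum_range_succ_mk, ← Ico_add_one_right_eq_Icc,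
      sum_Ico_eq_sum_range]
    refine sum_congr (by simp) fun k hk => ?_
    have hk : k ≤ m := Nat.lt_succ_iff.mp (mem_range.mp hk)
    rw [Nat.add_sub_cancel_left, add_comm 2 k, show m + 4 - (k + 2) = m - k + 2 by omega]
  rw [starGraph_eq_starGraph_zero, hf.apply_starGraph, Fintype.card_fin, starPoly_add_two,
    Nat.sum_antidiagonal_succ', Nat.sum_antidiagonal_succ',
    show (Z + Z⁻¹) / A - Z⁻¹ / A ^ 3 = P₁ from rfl, hsum]
  dsimp only
  simp only [Nat.reduceSubDiff]
  ring
end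
end

section
/- For a rooted forest Q with roots R (one root per component), the counts c_{i,j}(Q,R) — the number of independent sets I of size i in Q such that exactly i−j vertices of Q are the parent of at least one vertex of I — do not depend on the choice of roots R. -/
open scoped Classical

noncomputable section

/-- A rooting of a forest: a choice of one root in each connected component,
encoded by the set of roots together with the induced parent function. -/
structure Rooting {V : Type} [Fintype V] [DecidableEq V] (G : SimpleGraph V) where
  roots : Set V
  parent : V → V
  parent_of_root : ∀ v ∈ roots, parent v = v
  adj_parent : ∀ v, v ∉ roots → G.Adj v (parent v)
  reaches : ∀ v : V, ∃ n : ℕ, parent^[n] v ∈ roots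
  unique_root : ∀ v : V, ∃! r : V, r ∈ roots ∧ G.Reachable v r

/-- The set of vertices which are the parent of at least one vertex of `I`. -/
def parentsOf {V : Type} [Fintype V] [DecidableEq V] {G : SimpleGraph V}
    (R : Rooting G) (I : Finset V) : Set V :=
  {w : V | ∃ v ∈ I, v ∉ R.roots ∧ R.parent v = w}

/-- `I` is an independent set of vertices. -/
def IsIndep {V : Type} (G : SimpleGraph V) (I : Finset V) : Prop :=
  ∀ x ∈ I, ∀ y ∈ I, ¬ G.Adj x y

/-- `c_{i,j}(Q, R)`: the number of independent sets `I` of size `i` such that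
exactly `i − j` vertices are the parent of at least one vertex of `I`. -/
def cCoeff {V : Type} [Fintype V] [DecidableEq V] (G : SimpleGraph V)
    (R : Rooting G) (i j : ℕ) : ℕ :=
  Set.ncard {I : Finset V | I.card = i ∧ IsIndep G I ∧ (parentsOf R I).ncard + j = i}

namespace RootAux

variable {V : Type} [Fintype V] [DecidableEq V] {G : SimpleGraph V}

/-- Two roots in the same component coincide. -/
lemma root_eq (R : Rooting G) {r s : V} (hr : r ∈ R.roots) (hs : s ∈ R.roots)
    (h : G.Reachable r s) : r = s := by
  obtain ⟨t, _, ht⟩ := R.unique_root r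
  exact (ht r ⟨hr, SimpleGraph.Reachable.refl r⟩).trans (ht s ⟨hs, h⟩).symm

/-- first hitting time of the root set along parent iterates -/
def hit (R : Rooting G) (v : V) : ℕ := Nat.find (R.reaches v)

lemma hit_spec (R : Rooting G) (v : V) : R.parent^[hit R v] v ∈ R.roots :=
  Nat.find_spec (R.reaches v)

lemma hit_min (R : Rooting G) (v : V) {m : ℕ} (hm : m < hit R v) :
    R.parent^[m] v ∉ R.roots := Nat.find_min (R.reaches v) hm

lemma hit_eq_zero (R : Rooting G) {v : V} (hv : v ∈ R.roots) : hit R v = 0 := by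
  have : R.parent^[0] v ∈ R.roots := by simpa using hv
  exact Nat.le_zero.mp (Nat.find_le this)

lemma hit_ne_zero (R : Rooting G) {v : V} (hv : v ∉ R.roots) : hit R v ≠ 0 := by
  intro h
  have := hit_spec R v
  rw [h] at this
  simp at this
  exact hv this

lemma hit_parent (R : Rooting G) {v : V} (hv : v ∉ R.roots) :
    hit R v = hit R (R.parent v) + 1 := by
  have h0 := hit_ne_zero R hv
  obtain ⟨m, hm⟩ := Nat.exists_eq_succ_of_ne_zero h0
  have h1 : R.parent^[m] (R.parent v) ∈ R.roots := by
    have := hit_spec R v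
    rwa [hm, Function.iterate_succ_apply] at this
  have hle : hit R (R.parent v) ≤ m := Nat.find_le h1
  have hge : m ≤ hit R (R.parent v) := by
    by_contra hlt
    push_neg at hlt
    have h2 : R.parent^[hit R (R.parent v)] (R.parent v) ∈ R.roots := hit_spec R (R.parent v)
    rw [← Function.iterate_succ_apply] at h2
    have := hit_min R v (m := hit R (R.parent v) + 1) (by omega)
    exact this h2
  omega

/-- The trajectory of parent iterates is a path. -/
lemma traj_walk (R : Rooting G) : ∀ n : ℕ, ∀ v s : V, hit R v = n →
    R.parent^[n] v = s →
    ∃ p : G.Walk v s, p.IsPath ∧ (∀ x ∈ p.support, hit R x ≤ n) ∧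
      (v ∉ R.roots → p.getVert 1 = R.parent v) := by
  intro n
  induction n with
  | zero =>
    intro v s h0 hs
    simp only [Function.iterate_zero_apply] at hs
    subst hs
    refine ⟨SimpleGraph.Walk.nil, by simp, by intro x hx; simp at hx; subst hx; omega, ?_⟩
    intro hv
    exact absurd h0 (hit_ne_zero R hv)
  | succ n ih =>
    intro v s hn hs
    have hv : v ∉ R.roots := by
      intro hv
      rw [hit_eq_zero R hv] at hn
      exact Nat.succ_ne_zero n hn.symm
    have hpn : hit R (R.parent v) = n := by
      have := hit_parent R hv
      omega
    have hps : R.parent^[n] (R.parent v) = s := by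
      rwa [← Function.iterate_succ_apply]
    obtain ⟨q, hq, hqs, _⟩ := ih (R.parent v) s hpn hps
    refine ⟨SimpleGraph.Walk.cons (R.adj_parent v hv) q, ?_, ?_, ?_⟩
    · rw [SimpleGraph.Walk.cons_isPath_iff]
      refine ⟨hq, fun hmem => ?_⟩
      have := hqs v hmem
      omega
    · intro x hx
      rw [SimpleGraph.Walk.support_cons, List.mem_cons] at hx
      rcases hx with rfl | hx
      · exact le_of_eq hn
      · exact (hqs x hx).trans (Nat.le_succ n)
    · intro _
      simp [SimpleGraph.Walk.getVert_cons_succ]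

/-- The root reached by iterates equals any root reachable. -/
lemma traj_root_eq (R : Rooting G) {v r : V} (hr : r ∈ R.roots) (hvr : G.Reachable v r) :
    R.parent^[hit R v] v = r := by
  obtain ⟨p, hp, _, _⟩ := traj_walk R (hit R v) v _ rfl rfl
  have h1 : G.Reachable v (R.parent^[hit R v] v) := ⟨p⟩
  exact root_eq R (hit_spec R v) hr (h1.symm.trans hvr)

/-- Key lemma: the parent of a non-root vertex is the second vertex of any path
from it to the root of its component. -/
lemma parent_eq_getVert (hG : G.IsAcyclic) (R : Rooting G) {v r : V} (hv : v ∉ R.roots)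
    (hr : r ∈ R.roots) (p : G.Walk v r) (hp : p.IsPath) :
    R.parent v = p.getVert 1 := by
  have hvr : G.Reachable v r := ⟨p⟩
  have hs : R.parent^[hit R v] v = r := traj_root_eq R hr hvr
  obtain ⟨q, hq, _, hq1⟩ := traj_walk R (hit R v) v r rfl hs
  have hpq : (⟨p, hp⟩ : G.Path v r) = ⟨q, hq⟩ := hG.path_unique _ _
  have : p = q := congrArg Subtype.val hpq
  rw [this, hq1 hv]

lemma not_root_of_adj_root (R : Rooting G) {r u : V} (hr : r ∈ R.roots)
    (hu : G.Adj u r) : u ∉ R.roots := by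
  intro huS
  exact hu.ne (root_eq R huS hr hu.reachable)

/-- Any neighbour of a root has that root as parent. -/
lemma parent_adj_root (hG : G.IsAcyclic) (R : Rooting G) {r u : V} (hr : r ∈ R.roots)
    (hu : G.Adj u r) : R.parent u = r := by
  have huS : u ∉ R.roots := not_root_of_adj_root R hr hu
  have hp : (SimpleGraph.Walk.cons hu SimpleGraph.Walk.nil).IsPath := by
    simp [hu.ne]
  have := parent_eq_getVert hG R huS hr _ hp
  simpa using this

/-- A neighbour `u ≠ r` of a vertex `r'` adjacent to the root `r` has parent `r'`. -/
lemma parent_adj_adj_root (hG : G.IsAcyclic) (R : Rooting G) {r r' u : V}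
    (hr : r ∈ R.roots) (h1 : G.Adj r r') (hu : G.Adj u r') (hur : u ≠ r) :
    R.parent u = r' := by
  have hur' : u ≠ r' := hu.ne
  have hr'r : r' ≠ r := h1.ne'
  have huS : u ∉ R.roots := by
    intro huS
    exact hur (root_eq R huS hr (hu.reachable.trans h1.symm.reachable))
  have hp : (SimpleGraph.Walk.cons hu (SimpleGraph.Walk.cons h1.symm
      SimpleGraph.Walk.nil)).IsPath := by
    simp [hur', hur, hr'r]
  have := parent_eq_getVert hG R huS hr _ hp
  simpa using this

end RootAux

namespace RootAux

variable {V : Type} [Fintype V] [DecidableEq V] {G : SimpleGraph V}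

/-- Move the root `r` of a component to an adjacent vertex `r'`. -/
def moveRoot (R : Rooting G) {r r' : V} (hr : r ∈ R.roots) (ha : G.Adj r r') :
    Rooting G where
  roots := (R.roots \ {r}) ∪ {r'}
  parent v := if v = r ∨ v = r' then r' else R.parent v
  parent_of_root := by
    intro v hv
    by_cases h : v = r ∨ v = r'
    · simp only [if_pos h]
      rcases h with rfl | rfl
      · rcases hv with ⟨_, h2⟩ | h2
        · simpa using h2
        · exact (Set.mem_singleton_iff.mp h2).symm
      · rfl
    · simp only [if_neg h]
      push_neg at h
      rcases hv with ⟨hv1, _⟩ | hv2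
      · exact R.parent_of_root v hv1
      · exact absurd (Set.mem_singleton_iff.mp hv2) h.2
  adj_parent := by
    intro v hv
    simp only [Set.mem_union, Set.mem_diff, Set.mem_singleton_iff, not_or, not_and,
      not_not] at hv
    obtain ⟨hv1, hv2⟩ := hv
    by_cases h : v = r ∨ v = r'
    · simp only [if_pos h]
      rcases h with rfl | rfl
      · exact ha
      · exact absurd rfl hv2
    · simp only [if_neg h]
      push_neg at h
      exact R.adj_parent v (fun hS => h.1 (hv1 hS))
  reaches := by
    have key : ∀ n : ℕ, ∀ v : V, R.parent^[n] v ∈ R.roots →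
        ∃ m : ℕ, (fun v => if v = r ∨ v = r' then r' else R.parent v)^[m] v ∈
          (R.roots \ {r}) ∪ {r'} := by
      intro n
      induction n with
      | zero =>
        intro v hv
        simp only [Function.iterate_zero_apply] at hv
        by_cases hvr : v = r ∨ v = r'
        · refine ⟨1, ?_⟩
          simp only [Function.iterate_one, if_pos hvr]
          exact Or.inr rfl
        · push_neg at hvr
          exact ⟨0, Or.inl ⟨hv, by simpa using hvr.1⟩⟩
      | succ n ih =>
        intro v hv
        by_cases hvr : v = r ∨ v = r'
        · refine ⟨1, ?_⟩
          simp only [Function.iterate_one, if_pos hvr]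
          exact Or.inr rfl
        · rw [Function.iterate_succ_apply] at hv
          obtain ⟨m, hm⟩ := ih (R.parent v) hv
          refine ⟨m + 1, ?_⟩
          rw [Function.iterate_succ_apply]
          simpa only [if_neg hvr] using hm
    intro v
    obtain ⟨n, hn⟩ := R.reaches v
    exact key n v hn
  unique_root := by
    intro v
    obtain ⟨s, ⟨hs, hvs⟩, hu⟩ := R.unique_root v
    by_cases hsr : s = r
    · subst hsr
      refine ⟨r', ⟨Or.inr rfl, hvs.trans ha.reachable⟩, ?_⟩
      rintro y ⟨hy, hvy⟩
      rcases hy with ⟨hy1, hy2⟩ | hy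
      · exact absurd (hu y ⟨hy1, hvy⟩) (by simpa using hy2)
      · exact Set.mem_singleton_iff.mp hy
    · refine ⟨s, ⟨Or.inl ⟨hs, by simpa using hsr⟩, hvs⟩, ?_⟩
      rintro y ⟨hy, hvy⟩
      rcases hy with ⟨hy1, _⟩ | hy
      · exact hu y ⟨hy1, hvy⟩
      · rcases Set.mem_singleton_iff.mp hy with rfl
        exact absurd (hu r ⟨hr, hvy.trans ha.symm.reachable⟩)
          (fun h => hsr h.symm)

@[simp] lemma moveRoot_roots (R : Rooting G) {r r' : V} (hr : r ∈ R.roots)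
    (ha : G.Adj r r') : (moveRoot R hr ha).roots = (R.roots \ {r}) ∪ {r'} := rfl

@[simp] lemma moveRoot_parent (R : Rooting G) {r r' : V} (hr : r ∈ R.roots)
    (ha : G.Adj r r') (v : V) :
    (moveRoot R hr ha).parent v = if v = r ∨ v = r' then r' else R.parent v := rfl

end RootAux

namespace RootAux

variable {V : Type} [Fintype V] [DecidableEq V] {G : SimpleGraph V}

/-- Parents of `I`-vertices other than `r, r'`. -/
def P0 (R : Rooting G) (r r' : V) (I : Finset V) : Set V :=
  {w | ∃ v ∈ I, v ∉ R.roots ∧ v ≠ r ∧ v ≠ r' ∧ R.parent v = w}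

lemma P0_congr (R : Rooting G) (r r' : V) {I I' : Finset V}
    (h : ∀ v, v ≠ r → v ≠ r' → (v ∈ I ↔ v ∈ I')) : P0 R r r' I = P0 R r r' I' := by
  ext w
  constructor
  · rintro ⟨v, hvI, h1, h2, h3, h4⟩
    exact ⟨v, (h v h2 h3).mp hvI, h1, h2, h3, h4⟩
  · rintro ⟨v, hvI, h1, h2, h3, h4⟩
    exact ⟨v, (h v h2 h3).mpr hvI, h1, h2, h3, h4⟩

lemma parentsOf_eq (hG : G.IsAcyclic) (R : Rooting G) {r r' : V} (hr : r ∈ R.roots)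
    (ha : G.Adj r r') (I : Finset V) :
    parentsOf R I = if r' ∈ I then insert r (P0 R r r' I) else P0 R r r' I := by
  have hr'S : r' ∉ R.roots := not_root_of_adj_root R hr ha.symm
  have hpr' : R.parent r' = r := parent_adj_root hG R hr ha.symm
  ext w
  simp only [parentsOf, Set.mem_setOf_eq]
  split_ifs with hI
  · constructor
    · rintro ⟨v, hvI, hvS, hpv⟩
      by_cases hvr' : v = r'
      · subst hvr'
        exact Set.mem_insert_iff.mpr (Or.inl ((hpr'.symm.trans hpv).symm))
      · have hvr : v ≠ r := fun h => hvS (h ▸ hr)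
        exact Set.mem_insert_iff.mpr (Or.inr ⟨v, hvI, hvS, hvr, hvr', hpv⟩)
    · intro hw
      rcases Set.mem_insert_iff.mp hw with rfl | ⟨v, hvI, h1, _, _, h4⟩
      · exact ⟨r', hI, hr'S, hpr'⟩
      · exact ⟨v, hvI, h1, h4⟩
  · constructor
    · rintro ⟨v, hvI, hvS, hpv⟩
      have hvr' : v ≠ r' := fun h => hI (h ▸ hvI)
      have hvr : v ≠ r := fun h => hvS (h ▸ hr)
      exact ⟨v, hvI, hvS, hvr, hvr', hpv⟩
    · rintro ⟨v, hvI, h1, _, _, h4⟩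
      exact ⟨v, hvI, h1, h4⟩

lemma parentsOf_move_eq (R : Rooting G) {r r' : V} (hr : r ∈ R.roots)
    (ha : G.Adj r r') (I : Finset V) :
    parentsOf (moveRoot R hr ha) I =
      if r ∈ I then insert r' (P0 R r r' I) else P0 R r r' I := by
  have hne : r ≠ r' := ha.ne
  ext w
  simp only [parentsOf, Set.mem_setOf_eq, moveRoot_roots, moveRoot_parent]
  have hrS'' : r ∉ (R.roots \ {r}) ∪ {r'} := by
    simp [hne]
  have hmem : ∀ v, v ≠ r → v ≠ r' → (v ∉ (R.roots \ {r}) ∪ {r'} ↔ v ∉ R.roots) := by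
    intro v h1 h2
    simp [h1, h2]
  split_ifs with hI
  · constructor
    · rintro ⟨v, hvI, hvS, hpv⟩
      have hvr' : v ≠ r' := by
        intro h; exact hvS (h ▸ Or.inr rfl)
      by_cases hvr : v = r
      · subst hvr
        rw [if_pos (Or.inl rfl)] at hpv
        exact Set.mem_insert_iff.mpr (Or.inl hpv.symm)
      · rw [if_neg (by tauto)] at hpv
        exact Set.mem_insert_iff.mpr
          (Or.inr ⟨v, hvI, (hmem v hvr hvr').mp hvS, hvr, hvr', hpv⟩)
    · intro hw
      rcases Set.mem_insert_iff.mp hw with rfl | ⟨v, hvI, h1, h2, h3, h4⟩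
      · exact ⟨r, hI, hrS'', by rw [if_pos (Or.inl rfl)]⟩
      · exact ⟨v, hvI, (hmem v h2 h3).mpr h1, by rw [if_neg (by tauto)]; exact h4⟩
  · constructor
    · rintro ⟨v, hvI, hvS, hpv⟩
      have hvr' : v ≠ r' := by
        intro h; exact hvS (h ▸ Or.inr rfl)
      have hvr : v ≠ r := fun h => hI (h ▸ hvI)
      rw [if_neg (by tauto)] at hpv
      exact ⟨v, hvI, (hmem v hvr hvr').mp hvS, hvr, hvr', hpv⟩
    · rintro ⟨v, hvI, h1, h2, h3, h4⟩
      exact ⟨v, hvI, (hmem v h2 h3).mpr h1, by rw [if_neg (by tauto)]; exact h4⟩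

lemma ncard_parentsOf (hG : G.IsAcyclic) (R : Rooting G) {r r' : V} (hr : r ∈ R.roots)
    (ha : G.Adj r r') (I : Finset V) :
    (parentsOf R I).ncard =
      (P0 R r r' I).ncard + (if r' ∈ I ∧ r ∉ P0 R r r' I then 1 else 0) := by
  rw [parentsOf_eq hG R hr ha I]
  by_cases hI : r' ∈ I
  · by_cases hA : r ∈ P0 R r r' I
    · rw [if_pos hI, Set.insert_eq_self.mpr hA, if_neg (by tauto)]
      omega
    · rw [if_pos hI, Set.ncard_insert_of_notMem hA (Set.toFinite _),
        if_pos ⟨hI, hA⟩]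
  · rw [if_neg hI, if_neg (by tauto)]
    omega


lemma ncard_parentsOf_move (R : Rooting G) {r r' : V} (hr : r ∈ R.roots)
    (ha : G.Adj r r') (I : Finset V) :
    (parentsOf (moveRoot R hr ha) I).ncard =
      (P0 R r r' I).ncard + (if r ∈ I ∧ r' ∉ P0 R r r' I then 1 else 0) := by
  rw [parentsOf_move_eq R hr ha I]
  by_cases hI : r ∈ I
  · by_cases hB : r' ∈ P0 R r r' I
    · rw [if_pos hI, Set.insert_eq_self.mpr hB, if_neg (by tauto)]
      omega
    · rw [if_pos hI, Set.ncard_insert_of_notMem hB (Set.toFinite _),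
        if_pos ⟨hI, hB⟩]
  · rw [if_neg hI, if_neg (by tauto)]
    omega

/-- The involution exchanging `r` and `r'`. -/
def flip (R : Rooting G) (r r' : V) (I : Finset V) : Finset V :=
  if r' ∈ I ∧ r ∉ P0 R r r' I then insert r (I.erase r')
  else if r ∈ I ∧ r' ∉ P0 R r r' I then insert r' (I.erase r) else I

lemma flip_key (hG : G.IsAcyclic) (R : Rooting G) {r r' : V} (hr : r ∈ R.roots)
    (ha : G.Adj r r') (I : Finset V) (hI : IsIndep G I) :
    (flip R r r' I).card = I.card ∧ IsIndep G (flip R r r' I) ∧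
    (parentsOf R I).ncard = (parentsOf (moveRoot R hr ha) (flip R r r' I)).ncard ∧
    flip R r r' (flip R r r' I) = I := by
  have hne : r ≠ r' := ha.ne
  have hr'S : r' ∉ R.roots := not_root_of_adj_root R hr ha.symm
  have hnotboth : r ∈ I → r' ∉ I := fun h h' => hI r h r' h' ha
  have hAmem : r ∈ I → r ∉ P0 R r r' I := by
    rintro hrI ⟨v, hvI, hvS, _, _, hpv⟩
    exact hI v hvI r hrI (hpv ▸ R.adj_parent v hvS)
  have hBmem : r' ∈ I → r' ∉ P0 R r r' I := by
    rintro hrI ⟨v, hvI, hvS, _, _, hpv⟩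
    exact hI v hvI r' hrI (hpv ▸ R.adj_parent v hvS)
  by_cases h1 : r' ∈ I ∧ r ∉ P0 R r r' I
  · -- swap r' for r
    have hrI : r ∉ I := fun h => hnotboth h h1.1
    have hφI : flip R r r' I = insert r (I.erase r') := by
      simp only [flip]; rw [if_pos h1]
    have hrer : r ∉ I.erase r' := fun h => hrI (Finset.mem_of_mem_erase h)
    have hmem : ∀ v, v ≠ r → v ≠ r' → (v ∈ I ↔ v ∈ flip R r r' I) := by
      intro v hv1 hv2
      rw [hφI, Finset.mem_insert, Finset.mem_erase]
      constructor
      · intro h; exact Or.inr ⟨hv2, h⟩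
      · rintro (rfl | ⟨_, h⟩)
        · exact absurd rfl hv1
        · exact h
    have hQeq : P0 R r r' (flip R r r' I) = P0 R r r' I :=
      (P0_congr R r r' hmem).symm
    have hcard : (flip R r r' I).card = I.card := by
      rw [hφI, Finset.card_insert_of_notMem hrer, Finset.card_erase_add_one h1.1]
    have hadjr : ∀ y ∈ I.erase r', ¬ G.Adj r y := by
      intro y hy hadj
      have hyI : y ∈ I := Finset.mem_of_mem_erase hy
      have hyr' : y ≠ r' := (Finset.mem_erase.mp hy).1
      have hyr : y ≠ r := fun h => G.irrefl (h ▸ hadj)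
      have hyS : y ∉ R.roots := not_root_of_adj_root R hr hadj.symm
      exact h1.2 ⟨y, hyI, hyS, hyr, hyr', parent_adj_root hG R hr hadj.symm⟩
    have hindep : IsIndep G (flip R r r' I) := by
      intro x hx y hy hadj
      rw [hφI, Finset.mem_insert] at hx hy
      rcases hx with rfl | hx <;> rcases hy with rfl | hy
      · exact G.irrefl hadj
      · exact hadjr y hy hadj
      · exact hadjr x hx hadj.symm
      · exact hI x (Finset.mem_of_mem_erase hx) y (Finset.mem_of_mem_erase hy) hadj
    have hr'φ : r' ∉ flip R r r' I := by
      rw [hφI, Finset.mem_insert]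
      rintro (h | h)
      · exact hne h.symm
      · exact (Finset.mem_erase.mp h).1 rfl
    have hrφ : r ∈ flip R r r' I := by rw [hφI]; exact Finset.mem_insert_self r _
    have hB : r' ∉ P0 R r r' I := hBmem h1.1
    refine ⟨hcard, hindep, ?_, ?_⟩
    · rw [ncard_parentsOf hG R hr ha I, ncard_parentsOf_move R hr ha (flip R r r' I),
        hQeq, if_pos h1, if_pos ⟨hrφ, hB⟩]
    · have hcond2 : r ∈ flip R r r' I ∧ r' ∉ P0 R r r' (flip R r r' I) := by
        rw [hQeq]; exact ⟨hrφ, hB⟩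
      have hcond1 : ¬ (r' ∈ flip R r r' I ∧ r ∉ P0 R r r' (flip R r r' I)) := by
        intro h; exact hr'φ h.1
      conv_lhs => rw [flip]
      rw [if_neg hcond1, if_pos hcond2, hφI, Finset.erase_insert hrer,
        Finset.insert_erase h1.1]
  · by_cases h2 : r ∈ I ∧ r' ∉ P0 R r r' I
    · -- swap r for r'
      have hr'I : r' ∉ I := hnotboth h2.1
      have hφI : flip R r r' I = insert r' (I.erase r) := by
        simp only [flip]; rw [if_neg h1, if_pos h2]
      have hrer : r' ∉ I.erase r := fun h => hr'I (Finset.mem_of_mem_erase h)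
      have hmem : ∀ v, v ≠ r → v ≠ r' → (v ∈ I ↔ v ∈ flip R r r' I) := by
        intro v hv1 hv2
        rw [hφI, Finset.mem_insert, Finset.mem_erase]
        constructor
        · intro h; exact Or.inr ⟨hv1, h⟩
        · rintro (rfl | ⟨_, h⟩)
          · exact absurd rfl hv2
          · exact h
      have hQeq : P0 R r r' (flip R r r' I) = P0 R r r' I :=
        (P0_congr R r r' hmem).symm
      have hcard : (flip R r r' I).card = I.card := by
        rw [hφI, Finset.card_insert_of_notMem hrer, Finset.card_erase_add_one h2.1]
      have hadjr' : ∀ y ∈ I.erase r, ¬ G.Adj r' y := by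
        intro y hy hadj
        have hyI : y ∈ I := Finset.mem_of_mem_erase hy
        have hyr : y ≠ r := (Finset.mem_erase.mp hy).1
        have hyr' : y ≠ r' := fun h => G.irrefl (h ▸ hadj)
        have hyS : y ∉ R.roots := by
          intro hyS
          exact hyr (root_eq R hyS hr (hadj.symm.reachable.trans ha.symm.reachable))
        exact h2.2 ⟨y, hyI, hyS, hyr, hyr',
          parent_adj_adj_root hG R hr ha hadj.symm hyr⟩
      have hindep : IsIndep G (flip R r r' I) := by
        intro x hx y hy hadj
        rw [hφI, Finset.mem_insert] at hx hy
        rcases hx with rfl | hx <;> rcases hy with rfl | hy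
        · exact G.irrefl hadj
        · exact hadjr' y hy hadj
        · exact hadjr' x hx hadj.symm
        · exact hI x (Finset.mem_of_mem_erase hx) y (Finset.mem_of_mem_erase hy) hadj
      have hrφ : r ∉ flip R r r' I := by
        rw [hφI, Finset.mem_insert]
        rintro (h | h)
        · exact hne h
        · exact (Finset.mem_erase.mp h).1 rfl
      have hr'φ : r' ∈ flip R r r' I := by rw [hφI]; exact Finset.mem_insert_self r' _
      have hA : r ∉ P0 R r r' I := hAmem h2.1
      refine ⟨hcard, hindep, ?_, ?_⟩
      · rw [ncard_parentsOf hG R hr ha I, ncard_parentsOf_move R hr ha (flip R r r' I),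
          hQeq, if_neg (fun h => hr'I h.1), if_neg (fun h => hrφ h.1)]
      · have hcond1 : r' ∈ flip R r r' I ∧ r ∉ P0 R r r' (flip R r r' I) := by
          rw [hQeq]; exact ⟨hr'φ, hA⟩
        conv_lhs => rw [flip]
        rw [if_pos hcond1, hφI, Finset.erase_insert hrer, Finset.insert_erase h2.1]
    · have hφI : flip R r r' I = I := by
        simp only [flip]; rw [if_neg h1, if_neg h2]
      refine ⟨by rw [hφI], by rw [hφI]; exact hI, ?_, by rw [hφI, hφI]⟩
      rw [ncard_parentsOf hG R hr ha I, ncard_parentsOf_move R hr ha (flip R r r' I),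
        hφI, if_neg h1, if_neg h2]

end RootAux

namespace RootAux

variable {V : Type} [Fintype V] [DecidableEq V] {G : SimpleGraph V}

lemma cCoeff_moveRoot (hG : G.IsAcyclic) (R : Rooting G) {r r' : V} (hr : r ∈ R.roots)
    (ha : G.Adj r r') (i j : ℕ) :
    cCoeff G R i j = cCoeff G (moveRoot R hr ha) i j := by
  unfold cCoeff
  refine Set.ncard_congr (fun I _ => flip R r r' I) ?_ ?_ ?_
  · rintro I ⟨hc, hind, hp⟩
    obtain ⟨k1, k2, k3, _⟩ := flip_key hG R hr ha I hind
    exact ⟨k1.trans hc, k2, by rw [← k3]; exact hp⟩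
  · intro a b hA hB hab
    have hab' : flip R r r' a = flip R r r' b := hab
    obtain ⟨_, _, _, k4a⟩ := flip_key hG R hr ha a hA.2.1
    obtain ⟨_, _, _, k4b⟩ := flip_key hG R hr ha b hB.2.1
    calc a = flip R r r' (flip R r r' a) := k4a.symm
      _ = flip R r r' (flip R r r' b) := by rw [hab']
      _ = b := k4b
  · rintro J ⟨hc, hind, hp⟩
    obtain ⟨k1, k2, k3, k4⟩ := flip_key hG R hr ha J hind
    refine ⟨flip R r r' J, ⟨k1.trans hc, k2, ?_⟩, k4⟩
    obtain ⟨_, _, k3', _⟩ := flip_key hG R hr ha (flip R r r' J) k2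
    rw [k3', k4]
    exact hp

/-- The canonical root of the component of `v`. -/
def rt (R : Rooting G) (v : V) : V := (R.unique_root v).choose

lemma rt_mem (R : Rooting G) (v : V) : rt R v ∈ R.roots :=
  ((R.unique_root v).choose_spec.1).1

lemma rt_reach (R : Rooting G) (v : V) : G.Reachable v (rt R v) :=
  ((R.unique_root v).choose_spec.1).2

lemma rt_eq (R : Rooting G) {v s : V} (hs : s ∈ R.roots) (h : G.Reachable v s) :
    s = rt R v := (R.unique_root v).choose_spec.2 s ⟨hs, h⟩

/-- Total distance from the roots of `R'` to the corresponding roots of `R`. -/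
def meas (R R' : Rooting G) : ℕ :=
  ∑ s ∈ Finset.univ.filter (fun s => s ∈ R'.roots), G.dist s (rt R s)

lemma cCoeff_congr (R R' : Rooting G) (h1 : R.roots = R'.roots)
    (h2 : ∀ v, R.parent v = R'.parent v) (i j : ℕ) :
    cCoeff G R i j = cCoeff G R' i j := by
  have hp : ∀ I, parentsOf R I = parentsOf R' I := by
    intro I
    unfold parentsOf
    rw [h1]
    simp only [h2]
  unfold cCoeff
  congr 1
  ext I
  simp only [Set.mem_setOf_eq, hp]

lemma parent_eq_of_roots_eq (hG : G.IsAcyclic) (R R' : Rooting G)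
    (h : R.roots = R'.roots) (v : V) : R.parent v = R'.parent v := by
  by_cases hv : v ∈ R.roots
  · rw [R.parent_of_root v hv, R'.parent_of_root v (h ▸ hv)]
  · have hr : rt R v ∈ R.roots := rt_mem R v
    have hvr : G.Reachable v (rt R v) := rt_reach R v
    have p : G.Walk v (rt R v) := Classical.choice hvr
    have hv' : v ∉ R'.roots := h ▸ hv
    rw [parent_eq_getVert hG R hv hr p.toPath.1 p.toPath.2,
      parent_eq_getVert hG R' hv' (h ▸ hr) p.toPath.1 p.toPath.2]

lemma roots_eq_of_meas_zero (R R' : Rooting G) (h : meas R R' = 0) :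
    R.roots = R'.roots := by
  have key : ∀ s ∈ R'.roots, s ∈ R.roots := by
    intro s hs
    have hz : G.dist s (rt R s) = 0 := by
      have := (Finset.sum_eq_zero_iff).mp h s (by simp [hs])
      exact this
    have heq : s = rt R s := ((rt_reach R s).dist_eq_zero_iff).mp hz
    rw [heq]
    exact rt_mem R s
  ext x
  constructor
  · intro hx
    have h1 : rt R' x ∈ R'.roots := rt_mem R' x
    have h2 : rt R' x ∈ R.roots := key _ h1
    have h3 : G.Reachable x (rt R' x) := rt_reach R' x
    have h4 : x = rt R' x := root_eq R hx h2 h3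
    rw [h4]
    exact h1
  · exact key x

lemma cCoeff_aux (hG : G.IsAcyclic) : ∀ n : ℕ, ∀ R R' : Rooting G, meas R R' ≤ n →
    ∀ i j : ℕ, cCoeff G R i j = cCoeff G R' i j := by
  intro n
  induction n with
  | zero =>
    intro R R' hm i j
    have h0 : meas R R' = 0 := Nat.le_zero.mp hm
    have hroots := roots_eq_of_meas_zero R R' h0
    exact cCoeff_congr R R' hroots (parent_eq_of_roots_eq hG R R' hroots) i j
  | succ n ih =>
    intro R R' hm i j
    by_cases h0 : meas R R' ≤ n
    · exact ih R R' h0 i j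
    · push_neg at h0
      have hpos : ∃ s ∈ Finset.univ.filter (fun s => s ∈ R'.roots),
          0 < G.dist s (rt R s) := by
        by_contra hc
        push_neg at hc
        have : meas R R' = 0 :=
          Finset.sum_eq_zero (fun s hs => Nat.le_zero.mp (hc s hs))
        omega
      obtain ⟨r', hr'F, hd⟩ := hpos
      have hr'S' : r' ∈ R'.roots := (Finset.mem_filter.mp hr'F).2
      have hrS : rt R r' ∈ R.roots := rt_mem R r'
      have hreach : G.Reachable (rt R r') r' := (rt_reach R r').symm
      have hne : rt R r' ≠ r' := by
        intro h
        rw [h, SimpleGraph.dist_self] at hd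
        exact lt_irrefl 0 hd
      obtain ⟨w, hw⟩ := hreach.exists_walk_length_eq_dist
      obtain ⟨u, hadj, w', rfl⟩ := SimpleGraph.Walk.exists_eq_cons_of_ne hne w
      have hstep : cCoeff G R i j = cCoeff G (moveRoot R hrS hadj) i j :=
        cCoeff_moveRoot hG R hrS hadj i j
      have hlen : w'.length + 1 = G.dist (rt R r') r' := by
        simpa [SimpleGraph.Walk.length_cons] using hw
      have hdistu : G.dist r' u < G.dist r' (rt R r') := by
        have h1 : G.dist r' u ≤ w'.reverse.length := SimpleGraph.dist_le w'.reverse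
        rw [SimpleGraph.Walk.length_reverse] at h1
        have h2 : G.dist (rt R r') r' = G.dist r' (rt R r') := SimpleGraph.dist_comm
        omega
      have claim2 : rt (moveRoot R hrS hadj) r' = u := by
        have hu : u ∈ (moveRoot R hrS hadj).roots := Or.inr rfl
        have hru : G.Reachable r' u := ⟨w'.reverse⟩
        exact (rt_eq (moveRoot R hrS hadj) hu hru).symm
      have claim1 : ∀ s, s ∈ R'.roots → s ≠ r' →
          rt (moveRoot R hrS hadj) s = rt R s := by
        intro s hs hsne
        have h1 : rt R s ∈ R.roots := rt_mem R s
        have h2 : rt R s ≠ rt R r' := by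
          intro h
          have h3 : G.Reachable s r' := (rt_reach R s).trans (h ▸ (rt_reach R r').symm)
          exact hsne (root_eq R' hs hr'S' h3)
        have h3 : rt R s ∈ (moveRoot R hrS hadj).roots :=
          Or.inl ⟨h1, by simpa using h2⟩
        exact (rt_eq (moveRoot R hrS hadj) h3 (rt_reach R s)).symm
      have hlt : meas (moveRoot R hrS hadj) R' < meas R R' := by
        refine Finset.sum_lt_sum ?_ ⟨r', hr'F, ?_⟩
        · intro s hs
          by_cases hsr : s = r'
          · subst hsr
            rw [claim2]
            exact le_of_lt hdistu
          · rw [claim1 s (Finset.mem_filter.mp hs).2 hsr]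
        · rw [claim2]
          exact hdistu
      have hle : meas (moveRoot R hrS hadj) R' ≤ n := by omega
      exact hstep.trans (ih (moveRoot R hrS hadj) R' hle i j)

end RootAux

/-- The counts `c_{i,j}(Q, R)` do not depend on the choice of roots `R`. -/
theorem cCoeff_root_independent
    {V : Type} [Fintype V] [DecidableEq V] (G : SimpleGraph V)
    (hforest : G.IsAcyclic) (R R' : Rooting G) (i j : ℕ) :
    cCoeff G R i j = cCoeff G R' i j :=
  RootAux.cCoeff_aux hforest (RootAux.meas R R') R R' le_rfl i j
end
end

section
/- Let Q be a rooted forest with root set R, let v be a leaf of Q with neighbor ṽ, where neither v nor ṽ is a root. Let Q′ = Q − {v} (rooted at R) and Q″ = Q − {v, ṽ} rooted at R together with the children of ṽ other than v. Then for all i ≥ 1 and j ≥ 0, c_{i,j}(Q, R) = c_{i,j}(Q′, R) + c_{i−1,j}(Q″, R_new). -/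
open scoped Classical

noncomputable section

/-- Splitting independent sets according to whether they contain a non-root leaf
`v` with non-root neighbor `w`: `c_{i,j}(Q,R) = c_{i,j}(Q−v,R) + c_{i−1,j}(Q−{v,w},R_new)`,
where `R_new` consists of the old roots together with the children of `w` other than `v`. -/
theorem cCoeff_leaf_recursion
    {V : Type} [Fintype V] [DecidableEq V] (G : SimpleGraph V)
    (hforest : G.IsAcyclic) (R : Rooting G) (v w : V)
    (hleaf : IsLeaf G v w) (hv : v ∉ R.roots) (hw : w ∉ R.roots)
    (R' : Rooting (G.induce {x : V | x ≠ v}))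
    (hR'root : ∀ x : ↥{x : V | x ≠ v}, x ∈ R'.roots ↔ (x : V) ∈ R.roots)
    (hR'par : ∀ x : ↥{x : V | x ≠ v}, x ∉ R'.roots →
      ((R'.parent x : V) = R.parent (x : V)))
    (R'' : Rooting (G.induce {x : V | x ≠ v ∧ x ≠ w}))
    (hR''root : ∀ x : ↥{x : V | x ≠ v ∧ x ≠ w},
      x ∈ R''.roots ↔ ((x : V) ∈ R.roots ∨ ((x : V) ∉ R.roots ∧ R.parent (x : V) = w)))
    (hR''par : ∀ x : ↥{x : V | x ≠ v ∧ x ≠ w}, x ∉ R''.roots →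
      ((R''.parent x : V) = R.parent (x : V)))
    (i j : ℕ) (hi : 1 ≤ i) :
    cCoeff G R i j =
      cCoeff (G.induce {x : V | x ≠ v}) R' i j +
      cCoeff (G.induce {x : V | x ≠ v ∧ x ≠ w}) R'' (i - 1) j := by

  classical
  have hadj : G.Adj v w := by
    have h : w ∈ G.neighborSet v := by rw [hleaf]; rfl
    exact h
  have hvw : v ≠ w := G.ne_of_adj hadj
  have hparv : R.parent v = w := by
    have h : R.parent v ∈ G.neighborSet v := R.adj_parent v hv
    rwa [hleaf] at h
  have hpar_ne_v : ∀ x : V, x ∉ R.roots → R.parent x = v → x = w := by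
    intro x hx hpx
    have h : G.Adj x (R.parent x) := R.adj_parent x hx
    rw [hpx] at h
    have h2 : x ∈ G.neighborSet v := h.symm
    rwa [hleaf] at h2
  set e1 : ↥{x : V | x ≠ v} ↪ V := Function.Embedding.subtype _ with he1
  set e2 : ↥{x : V | x ≠ v ∧ x ≠ w} ↪ V := Function.Embedding.subtype _ with he2
  have hv_not_map : ∀ J : Finset ↥{x : V | x ≠ v ∧ x ≠ w}, v ∉ J.map e2 := by
    intro J h
    rw [Finset.mem_map] at h
    obtain ⟨a, _, ha⟩ := h
    exact a.prop.1 ha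
  have hw_not_map : ∀ J : Finset ↥{x : V | x ≠ v ∧ x ≠ w}, w ∉ J.map e2 := by
    intro J h
    rw [Finset.mem_map] at h
    obtain ⟨a, _, ha⟩ := h
    exact a.prop.2 ha
  -- parent transfer for Q'
  have P1 : ∀ J : Finset ↥{x : V | x ≠ v},
      parentsOf R (J.map e1) = Subtype.val '' (parentsOf R' J) := by
    intro J
    ext u
    constructor
    · rintro ⟨x, hxJ, hxr, hxp⟩
      rw [Finset.mem_map] at hxJ
      obtain ⟨a, haJ, rfl⟩ := hxJ
      have har : a ∉ R'.roots := fun h => hxr ((hR'root a).mp h)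
      exact ⟨R'.parent a, ⟨a, haJ, har, rfl⟩, by rw [hR'par a har]; exact hxp⟩
    · rintro ⟨p, ⟨a, haJ, har, rfl⟩, rfl⟩
      exact ⟨(a : V), Finset.mem_map_of_mem e1 haJ,
        fun h => har ((hR'root a).mpr h), (hR'par a har).symm⟩
  -- parent transfer for Q''
  have P2 : ∀ J : Finset ↥{x : V | x ≠ v ∧ x ≠ w},
      Subtype.val '' (parentsOf R'' J) = parentsOf R (J.map e2) \ {w} := by
    intro J
    ext u
    constructor
    · rintro ⟨p, ⟨a, haJ, har, rfl⟩, rfl⟩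
      have h1 : ¬(((a : V) ∈ R.roots) ∨ ((a : V) ∉ R.roots ∧ R.parent (a : V) = w)) :=
        fun h => har ((hR''root a).mpr h)
      push_neg at h1
      refine ⟨⟨(a : V), Finset.mem_map_of_mem e2 haJ, h1.1, (hR''par a har).symm⟩, ?_⟩
      exact (R''.parent a).prop.2
    · rintro ⟨⟨x, hxJ, hxr, hxp⟩, huw⟩
      rw [Finset.mem_map] at hxJ
      obtain ⟨a, haJ, rfl⟩ := hxJ
      simp only [Set.mem_singleton_iff] at huw
      have har : a ∉ R''.roots := by
        rw [hR''root]
        push_neg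
        exact ⟨hxr, fun _ hh => huw (hxp.symm.trans hh)⟩
      exact ⟨R''.parent a, ⟨a, haJ, har, rfl⟩, (hR''par a har).trans hxp⟩
  -- independence transfer
  have I1 : ∀ (s : Set V) (J : Finset ↥s),
      IsIndep (G.induce s) J ↔ IsIndep G (J.map (Function.Embedding.subtype fun x => x ∈ s)) := by
    intro s J
    constructor
    · intro h x hx y hy
      rw [Finset.mem_map] at hx hy
      obtain ⟨a, ha, rfl⟩ := hx
      obtain ⟨b, hb, rfl⟩ := hy
      intro hab
      exact h a ha b hb hab
    · intro h x hx y hy hxy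
      exact h _ (Finset.mem_map_of_mem _ hx) _ (Finset.mem_map_of_mem _ hy) hxy
  -- parent count for inserted sets
  have PB : ∀ J : Finset ↥{x : V | x ≠ v ∧ x ≠ w},
      (parentsOf R (insert v (J.map e2))).ncard = (parentsOf R'' J).ncard + 1 := by
    intro J
    have h1 : parentsOf R (insert v (J.map e2)) = insert w (parentsOf R (J.map e2) \ {w}) := by
      ext u
      simp only [parentsOf, Set.mem_setOf_eq, Set.mem_insert_iff, Set.mem_diff,
        Set.mem_singleton_iff, Finset.mem_insert]
      constructor
      · rintro ⟨x, hx | hx, hxr, hxp⟩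
        · subst hx
          left; rw [← hxp, hparv]
        · by_cases huw : u = w
          · left; exact huw
          · right; exact ⟨⟨x, hx, hxr, hxp⟩, huw⟩
      · rintro (rfl | ⟨⟨x, hx, hxr, hxp⟩, huw⟩)
        · exact ⟨v, Or.inl rfl, hv, hparv⟩
        · exact ⟨x, Or.inr hx, hxr, hxp⟩
    rw [h1, Set.ncard_insert_of_notMem (by simp) (Set.toFinite _), ← P2 J,
      Set.ncard_image_of_injective _ Subtype.val_injective]
  set A : Set (Finset V) :=
    {I | (I.card = i ∧ IsIndep G I ∧ (parentsOf R I).ncard + j = i) ∧ v ∉ I} with hA_def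
  set B : Set (Finset V) :=
    {I | (I.card = i ∧ IsIndep G I ∧ (parentsOf R I).ncard + j = i) ∧ v ∈ I} with hB_def
  have hSAB : cCoeff G R i j = A.ncard + B.ncard := by
    rw [cCoeff]
    have hsplit : {I : Finset V | I.card = i ∧ IsIndep G I ∧ (parentsOf R I).ncard + j = i}
        = A ∪ B := by
      ext I
      simp only [hA_def, hB_def, Set.mem_setOf_eq, Set.mem_union]
      tauto
    rw [hsplit, Set.ncard_union_eq ?_ (Set.toFinite _) (Set.toFinite _)]
    exact Set.disjoint_left.mpr fun I hIA hIB => hIA.2 hIB.2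
  have hA : A = (fun J : Finset ↥{x : V | x ≠ v} => J.map e1) ''
      {J : Finset ↥{x : V | x ≠ v} | J.card = i ∧ IsIndep (G.induce {x : V | x ≠ v}) J ∧
        (parentsOf R' J).ncard + j = i} := by
    ext I
    simp only [hA_def, Set.mem_setOf_eq, Set.mem_image]
    constructor
    · rintro ⟨⟨hcard, hind, hpar⟩, hvI⟩
      have hmem : ∀ x ∈ I, x ∈ {x : V | x ≠ v} := fun x hx hxv => hvI (hxv ▸ hx)
      have hIm : (I.subtype _).map e1 = I := Finset.subtype_map_of_mem hmem
      refine ⟨I.subtype _, ⟨?_, ?_, ?_⟩, hIm⟩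
      · rw [← Finset.card_map e1, hIm]; exact hcard
      · rw [I1]; rw [he1] at hIm; rw [hIm]; exact hind
      · have := P1 (I.subtype _)
        rw [hIm] at this
        rw [← Set.ncard_image_of_injective _ Subtype.val_injective, ← this]
        exact hpar
    · rintro ⟨J, ⟨hc, hind, hp⟩, rfl⟩
      refine ⟨⟨?_, ?_, ?_⟩, ?_⟩
      · rw [Finset.card_map]; exact hc
      · rw [he1]; exact (I1 _ J).mp hind
      · rw [P1 J, Set.ncard_image_of_injective _ Subtype.val_injective]; exact hp
      · intro h
        rw [Finset.mem_map] at h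
        obtain ⟨a, _, ha⟩ := h
        exact a.prop ha
  have hB : B = (fun J : Finset ↥{x : V | x ≠ v ∧ x ≠ w} => insert v (J.map e2)) ''
      {J : Finset ↥{x : V | x ≠ v ∧ x ≠ w} | J.card = i - 1 ∧
        IsIndep (G.induce {x : V | x ≠ v ∧ x ≠ w}) J ∧ (parentsOf R'' J).ncard + j = i - 1} := by
    ext I
    simp only [hB_def, Set.mem_setOf_eq, Set.mem_image]
    constructor
    · rintro ⟨⟨hcard, hind, hpar⟩, hvI⟩
      have hwI : w ∉ I := fun hwI => hind v hvI w hwI hadj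
      have hmem : ∀ x ∈ I.erase v, x ∈ {x : V | x ≠ v ∧ x ≠ w} := fun x hx =>
        ⟨Finset.ne_of_mem_erase hx, fun hxw => hwI (hxw ▸ Finset.mem_of_mem_erase hx)⟩
      have hIm : ((I.erase v).subtype _).map e2 = I.erase v := Finset.subtype_map_of_mem hmem
      have hgJ : insert v (((I.erase v).subtype _).map e2) = I := by
        rw [hIm]; exact Finset.insert_erase hvI
      refine ⟨(I.erase v).subtype _, ⟨?_, ?_, ?_⟩, hgJ⟩
      · rw [← Finset.card_map e2, hIm, Finset.card_erase_of_mem hvI, hcard]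
      · rw [I1]; rw [he2] at hIm; rw [hIm]
        exact fun x hx y hy => hind x (Finset.mem_of_mem_erase hx) y (Finset.mem_of_mem_erase hy)
      · have hpb := PB ((I.erase v).subtype _)
        rw [hgJ] at hpb
        omega
    · rintro ⟨J, ⟨hc, hind, hp⟩, rfl⟩
      have hvJ := hv_not_map J
      have hpb := PB J
      refine ⟨⟨?_, ?_, ?_⟩, Finset.mem_insert_self v _⟩
      · rw [Finset.card_insert_of_notMem hvJ, Finset.card_map]
        omega
      · intro x hx y hy hxy
        rw [Finset.mem_insert] at hx hy
        have hkey : ∀ z ∈ J.map e2, ¬ G.Adj v z := by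
          intro z hz hadj'
          have h2 : z ∈ G.neighborSet v := hadj'
          rw [hleaf] at h2
          exact hw_not_map J (h2 ▸ hz)
        rcases hx with rfl | hx
        · rcases hy with rfl | hy
          · exact G.irrefl hxy
          · exact hkey y hy hxy
        · rcases hy with rfl | hy
          · exact hkey x hx hxy.symm
          · exact (I1 _ J).mp hind x hx y hy hxy
      · omega
  have hAcard : A.ncard = cCoeff (G.induce {x : V | x ≠ v}) R' i j := by
    rw [hA, cCoeff, Set.ncard_image_of_injective _ (Finset.map_injective e1)]
  have hBcard : B.ncard = cCoeff (G.induce {x : V | x ≠ v ∧ x ≠ w}) R'' (i - 1) j := by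
    have hg_inj : Function.Injective
        (fun J : Finset ↥{x : V | x ≠ v ∧ x ≠ w} => insert v (J.map e2)) := by
      intro J K h
      have h' : insert v (J.map e2) = insert v (K.map e2) := h
      have h2 : J.map e2 = K.map e2 := by
        rw [← Finset.erase_insert (hv_not_map J), ← Finset.erase_insert (hv_not_map K), h']
      exact Finset.map_injective e2 h2
    rw [hB, cCoeff, Set.ncard_image_of_injective _ hg_inj]
  rw [hSAB, hAcard, hBcard]
end
end

section
/- For any forest Q with n vertices, the HOMFLY polynomial admits the closed form f(Q) = a^{−n} · Σ_{i,j ≥ 0} c_{i,j}(Q) · z^{n−2i} · (1 − a^{−2})^j. -/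
open scoped Classical

noncomputable section

/-! Orient every edge of the forest towards the root of its component. A vertex of maximal
height has no children, so it is either an isolated root or a leaf hanging from its parent `w`.
Splitting the independent sets `I` according to whether they contain that vertex shows that
`S(Q) = Σ_I (z⁻²)^|I| (1 - a⁻²)^(|I| - #parents(I))` satisfies the same isolated-vertex and
leaf recursions as `(a/z)^n f(Q)`, provided the children of `w` become roots of `Q − {v, w}`.
The induction therefore runs over parent maps with a rank that decreases towards the roots:
unlike rootings, these restrict to every induced subgraph. -/

open Finset SimpleGraph

lemma A_ne_zero : A ≠ 0 :=
  (map_ne_zero_iff _ (IsFractionRing.injective (MvPolynomial Bool ℚ) K)).mpr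
    (MvPolynomial.X_ne_zero false)

lemma Z_ne_zero : Z ≠ 0 :=
  (map_ne_zero_iff _ (IsFractionRing.injective (MvPolynomial Bool ℚ) K)).mpr
    (MvPolynomial.X_ne_zero true)

/-- `z^(n-2c) (1-a⁻²)^(c-p) = z^n · indepWeight c p` is the term of an independent set with `c`
vertices and `p` parents. -/
def indepWeight (c p : ℕ) : K := (Z ^ 2)⁻¹ ^ c * (1 - A⁻¹ ^ 2) ^ (c - p)

lemma indepWeight_succ_succ (c p : ℕ) :
    indepWeight (c + 1) (p + 1) = (Z ^ 2)⁻¹ * indepWeight c p := by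
  simp only [indepWeight, Nat.add_sub_add_right, pow_succ]
  ring

lemma indepWeight_succ_left {c p : ℕ} (h : p ≤ c) :
    indepWeight (c + 1) p = (Z ^ 2)⁻¹ * (1 - A⁻¹ ^ 2) * indepWeight c p := by
  simp only [indepWeight, Nat.sub_add_comm h, pow_succ]
  ring

lemma card_setOf_ne_and_ne {V : Type} [Fintype V] [DecidableEq V] {v w : V} (h : v ≠ w) :
    Fintype.card {x | x ≠ v ∧ x ≠ w} = Fintype.card V - 2 := by
  have h_toFinset : {x | x ≠ v ∧ x ≠ w}.toFinset = (univ.erase v).erase w := by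
    ext x
    simp [and_comm]
  rw [← Set.toFinset_card, h_toFinset, card_erase_of_mem (mem_erase.mpr ⟨h.symm, mem_univ w⟩),
    card_erase_of_mem (mem_univ v), card_univ, Nat.sub_sub]

lemma sum_range_sum_range_ite_eq {M : Type*} [AddCommMonoid M] {n c p : ℕ} (hc : c ≤ n)
    (hp : p ≤ c) (g : ℕ → ℕ → M) :
    ∑ i ∈ range (n + 1), ∑ j ∈ range (i + 1), (if c = i ∧ p + j = i then g i j else 0) =
      g c (c - p) := by
  rw [sum_eq_single c, sum_eq_single (c - p)]
  · simp [Nat.add_sub_cancel' hp]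
  · intro j _ hj
    simp only [true_and, ite_eq_right_iff]
    omega
  · simp
  · intro i _ hi
    simp [Ne.symm hi]
  · simp
    omega

section Indep

variable {V : Type} {G : SimpleGraph V}

lemma isIndep_insert [DecidableEq V] {v : V} {I : Finset V} :
    IsIndep G (insert v I) ↔ IsIndep G I ∧ ∀ x ∈ I, ¬ G.Adj v x := by
  simp only [IsIndep, Finset.mem_insert, forall_eq_or_imp, G.irrefl, not_false_eq_true,
    true_and]
  constructor
  · rintro ⟨hv, hI⟩
    exact ⟨fun x hx => (hI x hx).2, hv⟩
  · rintro ⟨hI, hv⟩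
    exact ⟨hv, fun x hx => ⟨fun h => hv x hx h.symm, hI x hx⟩⟩

lemma isIndep_map_subtype {s : Set V} {J : Finset s} :
    IsIndep G (J.map (Function.Embedding.subtype _)) ↔ IsIndep (G.induce s) J := by
  simp [IsIndep]

variable [Fintype V] [DecidableEq V]

lemma sum_indep_mem_eq_sum_insert {M : Type*} [AddCommMonoid M] (v : V) {s : Set V}
    (hs : ∀ x, x ∈ s ↔ x ≠ v ∧ ¬ G.Adj v x) (F : Finset V → M) :
    ∑ I ∈ univ.filter (fun I => IsIndep G I ∧ v ∈ I), F I =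
      ∑ I ∈ univ.filter (fun I : Finset V => IsIndep G I ∧ ↑I ⊆ s), F (insert v I) := by
  symm
  refine Finset.sum_nbij' (insert v) (Finset.erase · v) ?_ ?_ ?_ ?_ (fun _ _ => rfl)
  · intro I hI
    simp only [mem_filter, mem_univ, true_and] at hI ⊢
    exact ⟨isIndep_insert.mpr ⟨hI.1, fun x hx => ((hs x).mp (hI.2 hx)).2⟩,
      mem_insert_self v I⟩
  · intro I hI
    simp only [mem_filter, mem_univ, true_and] at hI ⊢
    rw [← insert_erase hI.2, isIndep_insert] at hI
    exact ⟨hI.1.1, fun x hx => (hs x).mpr ⟨ne_of_mem_erase hx, hI.1.2 x hx⟩⟩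
  · intro I hI
    simp only [mem_filter, mem_univ, true_and] at hI
    exact erase_insert fun hv => ((hs v).mp (hI.2 hv)).1 rfl
  · intro I hI
    simp only [mem_filter, mem_univ, true_and] at hI
    exact insert_erase hI.2

end Indep

structure ParentMap {V : Type} (G : SimpleGraph V) where
  roots : Set V
  parent : V → V
  rank : V → ℕ
  adj_parent : ∀ v ∉ roots, G.Adj v (parent v)
  rank_parent_lt : ∀ v ∉ roots, rank (parent v) < rank v
  adj_cases : ∀ ⦃u x : V⦄, G.Adj u x →
    (u ∉ roots ∧ parent u = x) ∨ (x ∉ roots ∧ parent x = u)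

namespace ParentMap

variable {V : Type} {G : SimpleGraph V} (P : ParentMap G)

def parentSet (I : Finset V) : Set V := {w : V | ∃ v ∈ I, v ∉ P.roots ∧ P.parent v = w}

lemma ncard_parentSet_le (I : Finset V) : (P.parentSet I).ncard ≤ I.card := by
  have h : P.parentSet I ⊆ P.parent '' I := by
    rintro _ ⟨v, hv, -, rfl⟩
    exact Set.mem_image_of_mem _ hv
  calc (P.parentSet I).ncard ≤ (P.parent '' I).ncard := Set.ncard_le_ncard h (Set.toFinite _)
    _ ≤ (I : Set V).ncard := Set.ncard_image_le (Set.toFinite _)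
    _ = I.card := Set.ncard_coe_finset I

lemma parentSet_insert_of_mem_roots [DecidableEq V] {v : V} (hv : v ∈ P.roots)
    (I : Finset V) : P.parentSet (insert v I) = P.parentSet I := by
  ext w
  simp only [parentSet, mem_insert, exists_eq_or_imp, hv, not_true_eq_false, false_and,
    false_or]

lemma parentSet_insert_of_notMem_roots [DecidableEq V] {v : V} (hv : v ∉ P.roots)
    (I : Finset V) : P.parentSet (insert v I) = insert (P.parent v) (P.parentSet I) := by
  ext w
  simp [parentSet, or_and_right, exists_or, hv, eq_comm]

lemma notMem_parentSet {v : V} (hv : ∀ u ∉ P.roots, P.parent u ≠ v) (I : Finset V) :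
    v ∉ P.parentSet I := by
  rintro ⟨u, -, hu, rfl⟩
  exact hv u hu rfl

lemma parentSet_inter_ne {v : V} (hv : ∀ u ∉ P.roots, P.parent u ≠ v) (I : Finset V) :
    P.parentSet I ∩ {x | x ≠ v} = P.parentSet I :=
  Set.inter_eq_left.mpr fun _ hx => ne_of_mem_of_not_mem hx (P.notMem_parentSet hv I)

lemma exists_childless [Fintype V] [Nonempty V] : ∃ v, ∀ u ∉ P.roots, P.parent u ≠ v := by
  obtain ⟨v, -, hv⟩ := exists_max_image univ P.rank univ_nonempty
  exact ⟨v, fun u hu h => (P.rank_parent_lt u hu).not_ge (h ▸ hv u (mem_univ u))⟩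

lemma adj_of_childless {v x : V} (hv : ∀ u ∉ P.roots, P.parent u ≠ v) (h : G.Adj v x) :
    v ∉ P.roots ∧ P.parent v = x :=
  (P.adj_cases h).resolve_right fun ⟨hx, hxv⟩ => hv x hx hxv

/-- The restriction to an induced subgraph: vertices whose parent is deleted become roots. -/
def induce (s : Set V) : ParentMap (G.induce s) where
  roots := {x | (x : V) ∈ P.roots ∨ P.parent x ∉ s}
  parent x := if h : P.parent x ∈ s then ⟨P.parent x, h⟩ else x
  rank x := P.rank x
  adj_parent x hx := by
    simp only [Set.mem_ofPred_eq, not_or, not_not] at hx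
    simpa [dif_pos hx.2] using P.adj_parent x hx.1
  rank_parent_lt x hx := by
    simp only [Set.mem_ofPred_eq, not_or, not_not] at hx
    simpa [dif_pos hx.2] using P.rank_parent_lt x hx.1
  adj_cases x y h := by
    rcases P.adj_cases h with ⟨hx, hxy⟩ | ⟨hy, hyx⟩
    · have hs : P.parent x ∈ s := hxy ▸ y.2
      exact Or.inl ⟨by simpa [hs] using hx, Subtype.ext (by simpa [hs] using hxy)⟩
    · have hs : P.parent y ∈ s := hyx ▸ x.2
      exact Or.inr ⟨by simpa [hs] using hy, Subtype.ext (by simpa [hs] using hyx)⟩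

lemma image_val_parentSet_induce (s : Set V) (J : Finset s) :
    Subtype.val '' (P.induce s).parentSet J =
      P.parentSet (J.map (Function.Embedding.subtype _)) ∩ s := by
  ext w
  simp only [parentSet, induce, Set.mem_image, Set.mem_ofPred_eq, Set.mem_inter_iff, mem_map,
    Function.Embedding.coe_subtype]
  constructor
  · rintro ⟨y, ⟨x, hx, hxr, rfl⟩, rfl⟩
    simp only [not_or, not_not] at hxr
    exact ⟨⟨x, ⟨x, hx, rfl⟩, hxr.1, by simp [hxr.2]⟩, by simp [hxr.2]⟩
  · rintro ⟨⟨_, ⟨x, hx, rfl⟩, hxr, rfl⟩, hs⟩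
    exact ⟨⟨P.parent x, hs⟩, ⟨x, hx, by simp [hxr, hs], by simp [hs]⟩, rfl⟩

lemma ncard_parentSet_induce (s : Set V) (J : Finset s) :
    ((P.induce s).parentSet J).ncard =
      (P.parentSet (J.map (Function.Embedding.subtype _)) ∩ s).ncard := by
  rw [← P.image_val_parentSet_induce, Set.ncard_image_of_injective _ Subtype.val_injective]

variable [Fintype V]

def indepSum : K :=
  ∑ I ∈ univ.filter (IsIndep G), indepWeight I.card (P.parentSet I).ncard

lemma indepSum_of_isEmpty [IsEmpty V] : P.indepSum = 1 := by
  have h : univ.filter (IsIndep G) = {∅} :=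
    eq_singleton_iff_unique_mem.mpr ⟨mem_filter.mpr ⟨mem_univ _, by simp [IsIndep]⟩,
      fun I _ => Subsingleton.elim _ _⟩
  rw [indepSum, h, sum_singleton]
  simp [indepWeight]

lemma indepSum_induce [DecidableEq V] (s : Set V) [Fintype s] :
    (P.induce s).indepSum = ∑ I ∈ univ.filter (fun I : Finset V => IsIndep G I ∧ ↑I ⊆ s),
      indepWeight I.card (P.parentSet I ∩ s).ncard := by
  refine Finset.sum_nbij' (·.map (Function.Embedding.subtype _)) (·.subtype (· ∈ s))
    ?_ ?_ ?_ ?_ ?_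
  · intro J hJ
    simp only [mem_filter, mem_univ, true_and] at hJ ⊢
    exact ⟨isIndep_map_subtype.mpr hJ, map_subtype_subset J⟩
  · intro I hI
    simp only [mem_filter, mem_univ, true_and] at hI ⊢
    rw [← isIndep_map_subtype, subtype_map_of_mem hI.2]
    exact hI.1
  · intro J _
    ext x
    simp
  · intro I hI
    simp only [mem_filter, mem_univ, true_and] at hI
    exact subtype_map_of_mem hI.2
  · intro J _
    rw [card_map, ncard_parentSet_induce]

section Childless

variable [DecidableEq V] {v : V}

lemma indepSum_eq_induce_add (hv : ∀ u ∉ P.roots, P.parent u ≠ v) :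
    P.indepSum = (P.induce {x | x ≠ v}).indepSum +
      ∑ I ∈ univ.filter (fun I => IsIndep G I ∧ v ∈ I),
        indepWeight I.card (P.parentSet I).ncard := by
  rw [indepSum_induce, indepSum, ← sum_filter_add_sum_filter_not _ (v ∈ ·), filter_filter,
    filter_filter, add_comm]
  congr 1
  refine sum_congr (filter_congr fun I _ => ?_) fun I _ => ?_
  · simp [Set.subset_def]
  · rw [P.parentSet_inter_ne hv]

lemma sum_indep_mem_of_mem_roots (hv : ∀ u ∉ P.roots, P.parent u ≠ v) (hr : v ∈ P.roots) :
    ∑ I ∈ univ.filter (fun I => IsIndep G I ∧ v ∈ I),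
        indepWeight I.card (P.parentSet I).ncard =
      (Z ^ 2)⁻¹ * (1 - A⁻¹ ^ 2) * (P.induce {x | x ≠ v}).indepSum := by
  have hs (x : V) : x ∈ {x | x ≠ v} ↔ x ≠ v ∧ ¬ G.Adj v x :=
    ⟨fun h => ⟨h, fun hx => (P.adj_of_childless hv hx).1 hr⟩, And.left⟩
  rw [sum_indep_mem_eq_sum_insert v hs, indepSum_induce, mul_sum]
  refine sum_congr rfl fun I hI => ?_
  have hvI : v ∉ I := fun h => (mem_filter.mp hI).2.2 h rfl
  rw [card_insert_of_notMem hvI, P.parentSet_insert_of_mem_roots hr,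
    P.parentSet_inter_ne hv,
    indepWeight_succ_left (P.ncard_parentSet_le I)]

lemma sum_indep_mem_of_notMem_roots (hv : ∀ u ∉ P.roots, P.parent u ≠ v)
    (hr : v ∉ P.roots) :
    ∑ I ∈ univ.filter (fun I => IsIndep G I ∧ v ∈ I),
        indepWeight I.card (P.parentSet I).ncard =
      (Z ^ 2)⁻¹ * (P.induce {x | x ≠ v ∧ x ≠ P.parent v}).indepSum := by
  have hs (x : V) : x ∈ {x | x ≠ v ∧ x ≠ P.parent v} ↔ x ≠ v ∧ ¬ G.Adj v x :=
    and_congr_right fun _ => not_congr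
      ⟨fun h => h ▸ P.adj_parent v hr, fun h => (P.adj_of_childless hv h).2.symm⟩
  rw [sum_indep_mem_eq_sum_insert v hs, indepSum_induce, mul_sum]
  refine sum_congr rfl fun I hI => ?_
  have hvI : v ∉ I := fun h => ((mem_filter.mp hI).2.2 h).1 rfl
  have hinter :
      P.parentSet I ∩ {x | x ≠ v ∧ x ≠ P.parent v} = P.parentSet I \ {P.parent v} := by
    ext x
    simp only [Set.mem_inter_iff, Set.mem_ofPred_eq, Set.mem_sdiff, Set.mem_singleton_iff]
    exact ⟨fun h => ⟨h.1, h.2.2⟩,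
      fun h => ⟨h.1, ne_of_mem_of_not_mem h.1 (P.notMem_parentSet hv I), h.2⟩⟩
  rw [card_insert_of_notMem hvI, P.parentSet_insert_of_notMem_roots hr,
    ← Set.insert_sdiff_singleton, Set.ncard_insert_of_notMem (by simp), hinter,
    indepWeight_succ_succ]

end Childless

end ParentMap

namespace Rooting

variable {V : Type} [Fintype V] [DecidableEq V] {G : SimpleGraph V} (R : Rooting G)

def height (v : V) : ℕ := Nat.find (R.reaches v)

lemma height_parent_lt {v : V} (hv : v ∉ R.roots) : R.height (R.parent v) < R.height v := by
  have hpos : 0 < R.height v := Nat.pos_of_ne_zero fun h => hv (Nat.find_eq_zero _ |>.mp h)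
  have : R.parent^[R.height v - 1] (R.parent v) ∈ R.roots := by
    rw [← Function.iterate_succ_apply, Nat.succ_eq_add_one, Nat.sub_add_cancel hpos]
    exact Nat.find_spec (R.reaches v)
  exact (Nat.find_le this).trans_lt (Nat.sub_lt hpos one_pos)

lemma exists_isPath_to_root (v : V) :
    ∃ r ∈ R.roots, ∃ p : G.Walk v r, p.IsPath ∧ (∀ y ∈ p.support, R.height y ≤ R.height v) ∧
      (v ∉ R.roots → p.snd = R.parent v) := by
  induction h : R.height v using Nat.strong_induction_on generalizing v with
  | _ n ih =>
  by_cases hv : v ∈ R.roots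
  · exact ⟨v, hv, .nil, .nil, by simp [h], fun h => (h hv).elim⟩
  obtain ⟨r, hr, p, hp, hph, -⟩ := ih _ (h ▸ R.height_parent_lt hv) (R.parent v) rfl
  have hvp : v ∉ p.support := fun hmem => (R.height_parent_lt hv).not_ge (hph v hmem)
  refine ⟨r, hr, .cons (R.adj_parent v hv) p, hp.cons hvp, ?_, fun _ => by simp⟩
  simp only [Walk.support_cons, List.mem_cons, forall_eq_or_imp, h, le_refl,
    true_and]
  exact fun y hy => (hph y hy).trans (h ▸ R.height_parent_lt hv).le

lemma root_eq_of_reachable {v r r' : V} (hr : r ∈ R.roots) (hr' : r' ∈ R.roots)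
    (h : G.Reachable v r) (h' : G.Reachable v r') : r = r' :=
  (R.unique_root v).unique ⟨hr, h⟩ ⟨hr', h'⟩

lemma adj_cases (hG : G.IsAcyclic) {u x : V} (h : G.Adj u x) :
    (u ∉ R.roots ∧ R.parent u = x) ∨ (x ∉ R.roots ∧ R.parent x = u) := by
  obtain ⟨r, hr, p, hp, -, hpsnd⟩ := R.exists_isPath_to_root u
  obtain ⟨r', hr', q, hq, -, hqsnd⟩ := R.exists_isPath_to_root x
  obtain rfl : r = r' := R.root_eq_of_reachable hr hr' (h.symm.reachable.trans p.reachable) q.reachable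
  by_cases hx : x ∈ p.support
  · -- the unique path from `u` to `x` is the edge `u x`, so `p` starts with it
    have htake : p.takeUntil x hx = .cons h .nil :=
      congrArg Subtype.val <|
        (hG.subsingleton_path _ _).elim ⟨_, hp.takeUntil hx⟩ (Path.singleton h)
    have hu : u ∉ R.roots := by
      intro hu
      obtain rfl : u = r := R.root_eq_of_reachable hu hr .rfl p.reachable
      rw [Walk.nil_iff_support_eq.mp (Walk.isPath_iff_nil.mp hp)] at hx
      exact h.ne (List.mem_singleton.mp hx).symm
    refine Or.inl ⟨hu, (hpsnd hu).symm.trans ?_⟩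
    rw [← p.take_spec hx, htake]
    simp
  · -- prepending the edge `x u` to `p` gives the path from `x` to its root
    have hcons : (Walk.cons h.symm p).IsPath := hp.cons hx
    have hx' : x ∉ R.roots := by
      intro hxr
      obtain rfl : x = r := R.root_eq_of_reachable hxr hr .rfl q.reachable
      exact hx p.end_mem_support
    have hqp : q = .cons h.symm p :=
      congrArg Subtype.val <| (hG.subsingleton_path _ _).elim ⟨q, hq⟩ ⟨_, hcons⟩
    refine Or.inr ⟨hx', (hqsnd hx').symm.trans ?_⟩
    rw [hqp]
    simp

def toParentMap (hG : G.IsAcyclic) : ParentMap G where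
  roots := R.roots
  parent := R.parent
  rank := R.height
  adj_parent := R.adj_parent
  rank_parent_lt _ := R.height_parent_lt
  adj_cases _ _ := R.adj_cases hG

end Rooting

section ClosedForm

variable {V : Type} [Fintype V] [DecidableEq V] {G : SimpleGraph V}

lemma cCoeff_eq_sum (R : Rooting G) (i j : ℕ) :
    (cCoeff G R i j : K) = ∑ I ∈ univ.filter (IsIndep G),
      if I.card = i ∧ (parentsOf R I).ncard + j = i then 1 else 0 := by
  rw [sum_ite, sum_const_zero, add_zero, sum_const, nsmul_one, filter_filter, cCoeff,
    ← Set.ncard_coe_finset]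
  congr 2
  ext I
  simp only [coe_filter, mem_univ, true_and, Set.mem_ofPred_eq]
  tauto

lemma sum_cCoeff_eq (R : Rooting G) (hG : G.IsAcyclic) :
    ∑ i ∈ range (Fintype.card V + 1), ∑ j ∈ range (i + 1),
      (cCoeff G R i j : K) * Z ^ ((Fintype.card V : ℤ) - 2 * (i : ℤ)) * (1 - A⁻¹ ^ 2) ^ j =
      Z ^ Fintype.card V * (R.toParentMap hG).indepSum := by
  have hZ (c : ℕ) :
      Z ^ ((Fintype.card V : ℤ) - 2 * (c : ℤ)) = Z ^ Fintype.card V * (Z ^ 2)⁻¹ ^ c := by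
    rw [zpow_sub₀ Z_ne_zero, div_eq_mul_inv, inv_pow, ← pow_mul]
    norm_cast
  calc _ = ∑ i ∈ range (Fintype.card V + 1), ∑ j ∈ range (i + 1),
        ∑ I ∈ univ.filter (IsIndep G), if I.card = i ∧ (parentsOf R I).ncard + j = i then
          Z ^ ((Fintype.card V : ℤ) - 2 * (i : ℤ)) * (1 - A⁻¹ ^ 2) ^ j else 0 := by
        simp only [cCoeff_eq_sum, sum_mul, ite_mul, one_mul, zero_mul]
    _ = ∑ I ∈ univ.filter (IsIndep G), Z ^ ((Fintype.card V : ℤ) - 2 * (I.card : ℤ)) *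
          (1 - A⁻¹ ^ 2) ^ (I.card - (parentsOf R I).ncard) := by
        rw [sum_congr rfl fun i _ => sum_comm, sum_comm]
        exact sum_congr rfl fun I _ => sum_range_sum_range_ite_eq (card_le_univ I)
          ((R.toParentMap hG).ncard_parentSet_le I) _
    _ = _ := by
        simp only [ParentMap.indepSum, mul_sum, hZ, indepWeight, mul_assoc]
        rfl

end ClosedForm

lemma HomflyRules.eq_mul_of_isolated {f : GraphFun} (hf : HomflyRules f) {V : Type} [Fintype V]
    [DecidableEq V] {G : SimpleGraph V} (hG : G.IsAcyclic) {v : V} (hv : ∀ x, ¬ G.Adj v x) :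
    f V G = ((Z + Z⁻¹) / A - Z⁻¹ / A ^ 3) * f ↥{x | x ≠ v} (G.induce {x | x ≠ v}) := by
  have hsep : ∀ x ∈ {x | x ≠ v}, ∀ y ∉ {x | x ≠ v}, ¬ G.Adj x y := by
    intro x _ y hy hxy
    obtain rfl : y = v := not_not.mp hy
    exact hv x hxy.symm
  have hcard : Fintype.card ↥({x | x ≠ v}ᶜ) = 1 :=
    Fintype.card_eq_one_iff.mpr ⟨⟨v, by simp⟩, fun y => Subtype.ext (not_not.mp y.2)⟩
  rw [hf.2.2.2 V G hG _ hsep, mul_comm]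
  -- the `Fintype` instances coming from `HomflyRules` are those for an arbitrary set
  congr 1
  · convert hf.2.1 _ (G.induce {x | x ≠ v}ᶜ) hcard
  · congr!

theorem HomflyRules.eq_mul_indepSum {f : GraphFun} (hf : HomflyRules f) {V : Type} [Fintype V]
    [DecidableEq V] {G : SimpleGraph V} (hG : G.IsAcyclic) (P : ParentMap G) :
    f V G = (Z * A⁻¹) ^ Fintype.card V * P.indepSum := by
  induction hn : Fintype.card V using Nat.strong_induction_on generalizing V with
  | _ n ih =>
  rcases n with _ | n
  · have := Fintype.card_eq_zero_iff.mp hn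
    rw [hf.1 V G this, P.indepSum_of_isEmpty, pow_zero, one_mul]
  have : Nonempty V := Fintype.card_pos_iff.mp (by omega)
  obtain ⟨v, hv⟩ := P.exists_childless
  have hcard : Fintype.card {x | x ≠ v} = n := by rw [Set.card_ne_eq, hn, Nat.add_sub_cancel]
  have := A_ne_zero
  have := Z_ne_zero
  by_cases hr : v ∈ P.roots
  · rw [hf.eq_mul_of_isolated hG fun x hx => (P.adj_of_childless hv hx).1 hr,
      ih n (by omega) (hG.induce _) (P.induce _) hcard,
      P.indepSum_eq_induce_add hv, P.sum_indep_mem_of_mem_roots hv hr]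
    simp only [mul_pow, inv_pow]
    field_simp
    ring
  · set w := P.parent v
    have hleaf : IsLeaf G v w := by
      ext x
      exact ⟨fun h => (P.adj_of_childless hv h).2.symm, fun h => h ▸ P.adj_parent v hr⟩
    have hvw : v ≠ w := (P.adj_parent v hr).ne
    obtain ⟨m, rfl⟩ : ∃ m, n = m + 1 :=
      ⟨n - 1, by have := Fintype.one_lt_card_iff.mpr ⟨v, w, hvw⟩; omega⟩
    have hcard₂ : Fintype.card {x | x ≠ v ∧ x ≠ w} = m := by
      rw [card_setOf_ne_and_ne hvw]
      omega
    rw [hf.2.2.1 V G hG v w hleaf,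
      ih (m + 1) (by omega) (hG.induce _) (P.induce _) hcard,
      ih m (by omega) (hG.induce _) (P.induce _) hcard₂,
      P.indepSum_eq_induce_add hv, P.sum_indep_mem_of_notMem_roots hv hr]
    simp only [mul_pow, inv_pow]
    field_simp
    ring

/-- Closed form for the HOMFLY polynomial of a forest on `n` vertices:
`f(Q) = a^{−n} Σ_{i,j} c_{i,j}(Q) z^{n−2i} (1 − a^{−2})^j`. -/
theorem homfly_closed_form (f : GraphFun) (hf : HomflyRules f)
    {V : Type} [Fintype V] [DecidableEq V] (G : SimpleGraph V)
    (hforest : G.IsAcyclic) (R : Rooting G) (n : ℕ) (hn : Fintype.card V = n) :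
    f V G = (A⁻¹) ^ n *
      ∑ i ∈ Finset.range (n + 1), ∑ j ∈ Finset.range (i + 1),
        (cCoeff G R i j : K) * Z ^ ((n : ℤ) - 2 * (i : ℤ)) * (1 - (A⁻¹) ^ 2) ^ j := by
  subst hn
  rw [sum_cCoeff_eq R hforest, hf.eq_mul_indepSum hforest (R.toParentMap hforest)]
  ring
end
end

section
/- For every rooted forest Q and every i ≥ 0, the coefficient c_{i,0}(Q) equals the number of matchings of size i in Q: mapping an independent set I of size i having exactly i distinct parent vertices to the set of i edges joining each element of I to its parent is a bijection onto the set of i-element matchings of Q. -/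
open scoped Classical

noncomputable section

/-- `M` is a matching of `G`: a set of edges, no two sharing an endpoint. -/
def IsMatching {V : Type} (G : SimpleGraph V) (M : Finset (Sym2 V)) : Prop :=
  (∀ e ∈ M, e ∈ G.edgeSet) ∧ ∀ e ∈ M, ∀ e' ∈ M, e ≠ e' → ∀ x : V, x ∈ e → x ∉ e'

/-- `b_i(Q)`: the number of matchings of size `i` in `G`. -/
def matchCount {V : Type} [Fintype V] [DecidableEq V] (G : SimpleGraph V) (i : ℕ) : ℕ :=
  Set.ncard {M : Finset (Sym2 V) | M.card = i ∧ IsMatching G M}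

/-!
Every edge of a forest joins a vertex to its parent: the parent walks of two adjacent vertices
end at the same root and are paths, so by uniqueness of paths one of them passes through the
other endpoint, which must then be its second vertex. Since `parent` has no 2-cycles (they never
reach a root), `v ↦ s(v, parent v)` is therefore injective with the whole edge set in its range,
and taking images is a bijection between vertex sets and edge sets of equal size. The image of `I`
is a matching iff `I` avoids the roots, has distinct parents, and contains no vertex together with
its parent; in a forest the last condition is independence of `I`.
-/

lemma Set.ncard_image_diff_eq_ncard_iff {α β : Type*} {f : α → β} {s t : Set α}
    (hs : s.Finite) : (f '' (s \ t)).ncard = s.ncard ↔ Disjoint s t ∧ Set.InjOn f s := by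
  constructor
  · intro h
    have himage : (f '' (s \ t)).ncard ≤ (s \ t).ncard := Set.ncard_image_le hs.sdiff
    have hdiff : s \ t = s :=
      Set.eq_of_subset_of_ncard_le Set.sdiff_subset (by omega) hs
    refine ⟨sdiff_eq_left.mp hdiff, hdiff ▸ Set.injOn_of_ncard_image_eq ?_ hs.sdiff⟩
    rw [h, hdiff]
  · rintro ⟨hdisj, hinj⟩
    rw [sdiff_eq_left.mpr hdisj, hinj.ncard_image]

lemma Function.Injective.bijOn_finsetImage {α β : Type*} [Fintype α] [DecidableEq β]
    {f : α → β} (hf : Function.Injective f) {P : Finset β → Prop}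
    (hP : ∀ M, P M → ↑M ⊆ Set.range f) (i : ℕ) :
    Set.BijOn (Finset.image f) {I | I.card = i ∧ P (I.image f)} {M | M.card = i ∧ P M} where
  left := fun I ⟨hI, hPI⟩ => ⟨by rwa [Finset.card_image_of_injective _ hf], hPI⟩
  right.left := (Finset.image_injective hf).injOn
  right.right := by
    rintro M ⟨hcard, hPM⟩
    obtain ⟨I, rfl⟩ := Finset.subset_univ_image_iff.mp fun e he => by
      simpa using hP M hPM he
    exact ⟨I, ⟨by rwa [Finset.card_image_of_injective _ hf] at hcard, hPM⟩, rfl⟩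

namespace Rooting

variable {V : Type} [Fintype V] [DecidableEq V] {G : SimpleGraph V} (R : Rooting G)

def depth (v : V) : ℕ := Nat.find (R.reaches v)

-- reducible, so that `toRoot v` can be rewritten by the lemmas about `iterateWalk`
abbrev root (v : V) : V := R.parent^[R.depth v] v

lemma root_mem_roots (v : V) : R.root v ∈ R.roots := Nat.find_spec (R.reaches v)

lemma iterate_parent_notMem_roots {v : V} {k : ℕ} (hk : k < R.depth v) :
    R.parent^[k] v ∉ R.roots :=
  Nat.find_min (R.reaches v) hk

lemma iterate_parent_injOn (v : V) :
    Set.InjOn (fun k => R.parent^[k] v) (Set.Iic (R.depth v)) := by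
  suffices ∀ j k, j < k → k ≤ R.depth v → R.parent^[j] v ≠ R.parent^[k] v by
    intro j hj k hk h
    by_contra hne
    rcases Nat.lt_or_gt_of_ne hne with hjk | hkj
    · exact this j k hjk hk h
    · exact this k j hkj hj h.symm
  intro j k hjk hk h
  -- applying `parent` another `depth v - k` times would reach the root too early
  have hroot : R.parent^[R.depth v - k + j] v = R.root v := by
    rw [Function.iterate_add_apply, h, ← Function.iterate_add_apply, Nat.sub_add_cancel hk]
  exact R.iterate_parent_notMem_roots (by omega) (hroot ▸ R.root_mem_roots v)

def iterateWalk : (n : ℕ) → (v : V) → (∀ k < n, R.parent^[k] v ∉ R.roots) →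
    G.Walk v (R.parent^[n] v)
  | 0, _, _ => .nil
  | n + 1, v, h => .cons (R.adj_parent v (h 0 n.succ_pos))
      (iterateWalk n (R.parent v) fun k hk => h (k + 1) (by omega))

lemma support_iterateWalk : ∀ (n : ℕ) (v : V) (h : ∀ k < n, R.parent^[k] v ∉ R.roots),
    (R.iterateWalk n v h).support = List.iterate R.parent v (n + 1)
  | 0, _, _ => rfl
  | n + 1, v, _ => congrArg (v :: ·) (support_iterateWalk n (R.parent v) _)

lemma snd_iterateWalk : ∀ (n : ℕ) (v : V) (h : ∀ k < n, R.parent^[k] v ∉ R.roots),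
    (R.iterateWalk n v h).snd = R.parent^[min n 1] v
  | 0, _, _ => rfl
  | n + 1, _, _ => by simp [iterateWalk]

def toRoot (v : V) : G.Walk v (R.root v) :=
  R.iterateWalk (R.depth v) v fun _ => R.iterate_parent_notMem_roots

lemma toRoot_isPath (v : V) : (R.toRoot v).IsPath := by
  rw [SimpleGraph.Walk.isPath_def, toRoot, support_iterateWalk, ← List.range_map_iterate]
  refine List.Nodup.map_on (fun j hj k hk => R.iterate_parent_injOn v ?_ ?_) List.nodup_range
  · simpa [Nat.lt_succ_iff] using hj
  · simpa [Nat.lt_succ_iff] using hk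

lemma snd_toRoot (v : V) : (R.toRoot v).snd = R.parent v := by
  rw [toRoot, snd_iterateWalk]
  rcases Nat.eq_zero_or_pos (R.depth v) with h | h
  · have hv : v ∈ R.roots := by simpa [root, h] using R.root_mem_roots v
    simp [h, R.parent_of_root v hv]
  · simp [Nat.min_eq_right h]

lemma root_eq_of_reachable_s13 {u v : V} (h : G.Reachable u v) : R.root u = R.root v :=
  (R.unique_root u).unique ⟨R.root_mem_roots u, (R.toRoot u).reachable⟩
    ⟨R.root_mem_roots v, h.trans (R.toRoot v).reachable⟩

lemma parent_eq_of_adj_of_mem_support_toRoot (hG : G.IsAcyclic) {a b : V} (hab : G.Adj a b)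
    (hb : b ∈ (R.toRoot a).support) : R.parent a = b :=
  R.snd_toRoot a ▸ (hG.eq_snd_of_adj_start (R.toRoot_isPath a) hab hb).symm

theorem parent_eq_or_parent_eq_of_adj (hG : G.IsAcyclic) {a b : V} (hab : G.Adj a b) :
    R.parent a = b ∨ R.parent b = a := by
  let q : G.Walk (R.root a) b :=
    ((R.toRoot b).copy rfl (R.root_eq_of_reachable_s13 hab.reachable).symm).reverse
  have hq : q.IsPath := by simpa [q] using R.toRoot_isPath b
  by_cases ha : a ∈ q.support
  · exact .inr (R.parent_eq_of_adj_of_mem_support_toRoot hG hab.symm (by simpa [q] using ha))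
  · refine .inl (R.parent_eq_of_adj_of_mem_support_toRoot hG hab ?_)
    simpa using hG.mem_support_of_ne_mem_support_of_adj_of_isPath
      (R.toRoot_isPath a).reverse hq hab ha

lemma eq_of_parent_eq_of_parent_eq {a b : V} (hab : R.parent a = b) (hba : R.parent b = a) :
    a = b := by
  have hcycle : ∀ n, R.parent^[n] a = a ∨ R.parent^[n] a = b := by
    intro n
    induction n with
    | zero => exact .inl rfl
    | succ n ih =>
      rw [Function.iterate_succ_apply']
      rcases ih with h | h <;> simp [h, hab, hba]
  obtain ⟨n, hn⟩ := R.reaches a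
  rcases hcycle n with h | h <;> rw [h] at hn
  · exact (R.parent_of_root a hn).symm.trans hab
  · exact hba.symm.trans (R.parent_of_root b hn)

lemma adj_parent_iff {v : V} : G.Adj v (R.parent v) ↔ v ∉ R.roots :=
  ⟨fun h hv => h.ne (R.parent_of_root v hv).symm, R.adj_parent v⟩

def parentEdge (v : V) : Sym2 V := s(v, R.parent v)

lemma parentEdge_injective : Function.Injective R.parentEdge := by
  intro a b h
  rcases Sym2.eq_iff.mp h with ⟨hab, -⟩ | ⟨hab, hba⟩
  · exact hab
  · exact R.eq_of_parent_eq_of_parent_eq hba hab.symm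

lemma edgeSet_subset_range_parentEdge (hG : G.IsAcyclic) :
    G.edgeSet ⊆ Set.range R.parentEdge := by
  intro e he
  induction e with
  | _ a b =>
    rcases R.parent_eq_or_parent_eq_of_adj hG he with h | h
    · exact ⟨a, by rw [parentEdge, h]⟩
    · exact ⟨b, by rw [parentEdge, h, Sym2.eq_swap]⟩

lemma parentsOf_eq_image (I : Finset V) : parentsOf R I = R.parent '' (↑I \ R.roots) := by
  ext w
  simp [parentsOf, and_assoc]

lemma ncard_parentsOf_eq_card_iff {I : Finset V} :
    (parentsOf R I).ncard = I.card ↔ (∀ v ∈ I, v ∉ R.roots) ∧ Set.InjOn R.parent I := by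
  rw [parentsOf_eq_image, ← Set.ncard_coe_finset,
    Set.ncard_image_diff_eq_ncard_iff I.finite_toSet, Set.disjoint_left]
  rfl

lemma isMatching_image_parentEdge {I : Finset V} (hroot : ∀ v ∈ I, v ∉ R.roots)
    (hI : IsIndep G I) (hinj : Set.InjOn R.parent I) : IsMatching G (I.image R.parentEdge) := by
  refine ⟨Finset.forall_mem_image.mpr fun v hv => R.adj_parent v (hroot v hv), ?_⟩
  simp only [Finset.forall_mem_image]
  intro u hu v hv hne x hxu hxv
  rw [parentEdge, Sym2.mem_iff] at hxu hxv
  rcases hxu with rfl | hxu <;> rcases hxv with hxv | hxv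
  · exact hne (congrArg _ hxv)
  · exact hI v hv x hu (hxv ▸ R.adj_parent v (hroot v hv))
  · exact hI u hu v hv (by rw [← hxv, hxu]; exact R.adj_parent u (hroot u hu))
  · exact hne (congrArg _ (hinj hu hv (hxu.symm.trans hxv)))

theorem isMatching_image_parentEdge_iff (hG : G.IsAcyclic) {I : Finset V} :
    IsMatching G (I.image R.parentEdge) ↔
      (∀ v ∈ I, v ∉ R.roots) ∧ IsIndep G I ∧ Set.InjOn R.parent I := by
  refine ⟨fun hM => ?_, fun ⟨hroot, hI, hinj⟩ => R.isMatching_image_parentEdge hroot hI hinj⟩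
  have hdisj : ∀ u ∈ I, ∀ v ∈ I, u ≠ v → ∀ x ∈ R.parentEdge u, x ∉ R.parentEdge v :=
    fun u hu v hv huv => hM.2 _ (Finset.mem_image_of_mem _ hu) _ (Finset.mem_image_of_mem _ hv)
      (R.parentEdge_injective.ne huv)
  refine ⟨fun v hv => R.adj_parent_iff.mp (hM.1 _ (Finset.mem_image_of_mem _ hv)), ?_, ?_⟩
  · intro x hx y hy hxy
    rcases R.parent_eq_or_parent_eq_of_adj hG hxy with h | h
    · exact hdisj x hx y hy hxy.ne y (h ▸ Sym2.mem_mk_right _ _) (Sym2.mem_mk_left _ _)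
    · exact hdisj x hx y hy hxy.ne x (Sym2.mem_mk_left _ _) (h ▸ Sym2.mem_mk_right _ _)
  · intro x hx y hy hxy
    by_contra hne
    exact hdisj x hx y hy hne _ (Sym2.mem_mk_right _ _) (hxy ▸ Sym2.mem_mk_right _ _)

end Rooting

/-- `c_{i,0}(Q)` equals the number of matchings of size `i`: the map sending an
independent set `I` (with `i` distinct parents) to the set of edges joining each
element of `I` to its parent is a bijection onto the `i`-element matchings. -/
theorem cCoeff_zero_eq_matchCount
    {V : Type} [Fintype V] [DecidableEq V] (G : SimpleGraph V)
    (hforest : G.IsAcyclic) (R : Rooting G) (i : ℕ) :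
    Set.BijOn (fun I : Finset V => I.image (fun v => s(v, R.parent v)))
      {I : Finset V | I.card = i ∧ IsIndep G I ∧ (parentsOf R I).ncard = i}
      {M : Finset (Sym2 V) | M.card = i ∧ IsMatching G M} ∧
    cCoeff G R i 0 = matchCount G i := by
  have hsource : {I : Finset V | I.card = i ∧ IsIndep G I ∧ (parentsOf R I).ncard = i} =
      {I | I.card = i ∧ IsMatching G (I.image R.parentEdge)} := by
    ext I
    refine and_congr_right fun hI => ?_
    rw [← hI, R.ncard_parentsOf_eq_card_iff, R.isMatching_image_parentEdge_iff hforest]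
    tauto
  have hbij := R.parentEdge_injective.bijOn_finsetImage (P := IsMatching G)
    (fun _ hM e he => R.edgeSet_subset_range_parentEdge hforest (hM.1 e he)) i
  rw [← hsource] at hbij
  refine ⟨hbij, ?_⟩
  simp only [cCoeff, matchCount, add_zero]
  rw [← hbij.image_eq, hbij.injOn.ncard_image]
end
end
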